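/- arXiv:1608.03646 — 9 statements merged into one kernel-verified Lean document; each statement's English description precedes it below -/
import Mathlib

section
/- For every positive rational number α (regarded as a real scalar), the relative (intrinsic) interior of α·P_{F(I)} equals F(C) ∩ interior(α·P_J); that is, relint(α P_{F(I)}) = F(C) ∩ relint(α P_J). -/
/-!
Write `V` for the range of `F`. Then `F(C) = V ∩ ℝ_{≥0}^ℱ`, and since every `F(βᵢ)` lies in `V`,
`P_{F(I)} = conv{F(βᵢ)} + (V ∩ ℝ_{≥0}^ℱ) = V ∩ P_J`, hence `α P_{F(I)} = V ∩ α P_J`.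

For a convex set `Q` and a subspace `V` meeting its interior, the relative interior of `V ∩ Q` is
`V ∩ interior Q`: a point of `V` that is interior to `Q` within `V` can be pushed slightly beyond
itself, away from a point of `V ∩ interior Q`, so it lies in the open segment between an interior
point of `Q` and a point of `Q`. Here `V` meets `interior (α P_J)` at
`α (F(β₁) + F(p))` for `p` interior to `C`, all of whose coordinates `F_σ(p)` are positive since
the `F_σ` are nonzero. Finally `α P_J` lies in the orthant, so `V` may be replaced by `F(C)`.
-/

open Pointwise

/-- The real vector in `ℝ^d` obtained from an integer lattice point. -/
def castR {d : ℕ} (v : Fin d → ℤ) : Fin d → ℝ := fun i => (v i : ℝ)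

/-- The cone `C = {p ∈ ℝ^d : F_σ(p) ≥ 0 for all σ ∈ ℱ}`. -/
def coneC {d : ℕ} {ℱ : Type} (Fσ : ℱ → ((Fin d → ℝ) →ₗ[ℝ] ℝ)) : Set (Fin d → ℝ) :=
  {p | ∀ σ, 0 ≤ Fσ σ p}

/-- The linear map `F : ℝ^d → ℝ^ℱ`, `F(p) = (F_σ(p))_σ`. -/
noncomputable def Fmap {d : ℕ} {ℱ : Type} (Fσ : ℱ → ((Fin d → ℝ) →ₗ[ℝ] ℝ)) :
    (Fin d → ℝ) →ₗ[ℝ] (ℱ → ℝ) :=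
  LinearMap.pi Fσ

/-- The nonnegative orthant `ℝ_{≥0}^ℱ`. -/
def orthant (ℱ : Type) : Set (ℱ → ℝ) := {x | ∀ σ, 0 ≤ x σ}

/-- The Newton polyhedron `P_I = conv(⋃ᵢ (βᵢ + C)) ⊆ ℝ^d`. -/
noncomputable def newtonPI {d r : ℕ} {ℱ : Type} (Fσ : ℱ → ((Fin d → ℝ) →ₗ[ℝ] ℝ))
    (β : Fin r → (Fin d → ℤ)) : Set (Fin d → ℝ) :=
  convexHull ℝ (⋃ i, castR (β i) +ᵥ coneC Fσ)

/-- The Newton polyhedron `P_{F(I)} = conv(⋃ᵢ (F(βᵢ) + F(C))) ⊆ ℝ^ℱ`. -/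
noncomputable def newtonPFI {d r : ℕ} {ℱ : Type} (Fσ : ℱ → ((Fin d → ℝ) →ₗ[ℝ] ℝ))
    (β : Fin r → (Fin d → ℤ)) : Set (ℱ → ℝ) :=
  convexHull ℝ (⋃ i, Fmap Fσ (castR (β i)) +ᵥ (Fmap Fσ '' coneC Fσ))

/-- The Newton polyhedron `P_J = conv(⋃ᵢ (F(βᵢ) + ℝ_{≥0}^ℱ)) ⊆ ℝ^ℱ`. -/
noncomputable def newtonPJ {d r : ℕ} {ℱ : Type} (Fσ : ℱ → ((Fin d → ℝ) →ₗ[ℝ] ℝ))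
    (β : Fin r → (Fin d → ℤ)) : Set (ℱ → ℝ) :=
  convexHull ℝ (⋃ i, Fmap Fσ (castR (β i)) +ᵥ orthant ℱ)

open Set Topology

theorem Submodule.add_inter_eq_inter_add {R M : Type*} [Ring R] [AddCommGroup M]
    [Module R M] {V : Submodule R M} {A : Set M} (hA : A ⊆ V) (O : Set M) :
    A + ((V : Set M) ∩ O) = (V : Set M) ∩ (A + O) := by
  ext x
  constructor
  · rintro ⟨a, ha, y, ⟨hyV, hyO⟩, rfl⟩
    exact ⟨V.add_mem (hA ha) hyV, a, ha, y, hyO, rfl⟩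
  · rintro ⟨hxV, a, ha, y, hyO, rfl⟩
    have hyV : y ∈ V := by simpa using sub_mem hxV (hA ha)
    exact ⟨a, ha, y, ⟨hyV, hyO⟩, rfl⟩

theorem convexHull_iUnion_vadd {E ι : Type*} [AddCommGroup E] [Module ℝ E] (a : ι → E)
    {K : Set E} (hK : Convex ℝ K) :
    convexHull ℝ (⋃ i, a i +ᵥ K) = convexHull ℝ (range a) + K := by
  rw [← hK.convexHull_eq, ← convexHull_add, hK.convexHull_eq]
  congr 1
  ext x
  simp [mem_add, mem_vadd_set]

theorem intrinsicInterior_eq_interior_of_affineSpan_eq_top {𝕜 V P : Type*} [Ring 𝕜]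
    [AddCommGroup V] [Module 𝕜 V] [TopologicalSpace P] [AddTorsor V P] {s : Set P}
    (hs : affineSpan 𝕜 s = ⊤) : intrinsicInterior 𝕜 s = interior s := by
  refine subset_antisymm ?_ interior_subset_intrinsicInterior
  have hopen : IsOpenMap ((↑) : affineSpan 𝕜 s → P) :=
    IsOpen.isOpenMap_subtype_val (by rw [hs]; exact isOpen_univ)
  exact (hopen.image_interior_subset _).trans (interior_mono (by simp))

theorem Convex.interior_preimage_eq {E W : Type*} [AddCommGroup E] [Module ℝ E]
    [TopologicalSpace E] [IsTopologicalAddGroup E] [ContinuousSMul ℝ E]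
    [AddCommGroup W] [Module ℝ W] [TopologicalSpace W] [IsTopologicalAddGroup W]
    [ContinuousSMul ℝ W] {Q : Set E} (hQ : Convex ℝ Q) (f : W →L[ℝ] E) {w₀ : W}
    (hw₀ : f w₀ ∈ interior Q) : interior (f ⁻¹' Q) = f ⁻¹' interior Q := by
  refine subset_antisymm (fun w hw => ?_) (preimage_interior_subset_interior_preimage f.continuous)
  have hpush : ∀ᶠ t in 𝓝[>] (0 : ℝ), w + t • (w - w₀) ∈ f ⁻¹' Q :=
    ((continuous_const.add (continuous_id.smul continuous_const)).tendsto' 0 w (by simp)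
      |>.eventually (mem_interior_iff_mem_nhds.1 hw)).filter_mono nhdsWithin_le_nhds
  obtain ⟨t, htQ, ht⟩ := (hpush.and self_mem_nhdsWithin).exists
  have ht' : (0 : ℝ) < 1 + t := by linarith [show (0 : ℝ) < t from ht]
  have hcombo := hQ.combo_interior_self_mem_interior hw₀ htQ
    (a := t / (1 + t)) (b := 1 / (1 + t)) (by positivity) (by positivity) (by field_simp; ring)
  show f w ∈ interior Q
  convert hcombo using 1
  simp only [map_add, map_smul, map_sub]
  match_scalars <;> field_simp
  ring

theorem Submodule.intrinsicInterior_inter {E : Type*} [NormedAddCommGroup E] [NormedSpace ℝ E]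
    (V : Submodule ℝ E) {Q : Set E} (hQ : Convex ℝ Q) (hVQ : ((V : Set E) ∩ interior Q).Nonempty) :
    intrinsicInterior ℝ ((V : Set E) ∩ Q) = (V : Set E) ∩ interior Q := by
  obtain ⟨x₀, hx₀V, hx₀Q⟩ := hVQ
  let φ := V.subtypeₗᵢ.toAffineIsometry
  have hslice : ∀ S, φ '' (φ ⁻¹' S) = (V : Set E) ∩ S := Subtype.image_preimage_coe _
  have hint : interior (φ ⁻¹' Q) = φ ⁻¹' interior Q :=
    hQ.interior_preimage_eq V.subtypeL (w₀ := ⟨x₀, hx₀V⟩) hx₀Q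
  have hspan : affineSpan ℝ (φ ⁻¹' Q) = ⊤ :=
    top_unique <| (isOpen_interior.affineSpan_eq_top ⟨⟨x₀, hx₀V⟩, by rwa [hint]⟩).ge.trans
      (affineSpan_mono _ interior_subset)
  rw [← hslice Q, AffineIsometry.intrinsicInterior_image,
    intrinsicInterior_eq_interior_of_affineSpan_eq_top hspan, hint, hslice]

theorem Submodule.smul_set_eq_self {K M : Type*} [DivisionRing K] [AddCommGroup M] [Module K M]
    (V : Submodule K M) {a : K} (ha : a ≠ 0) : a • (V : Set M) = V :=
  subset_antisymm (smul_set_subset_iff.2 fun _ hx => V.smul_mem a hx)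
    fun x hx => ⟨a⁻¹ • x, V.smul_mem _ hx, smul_inv_smul₀ ha x⟩

section NewtonPolyhedra

variable {d r : ℕ} {ℱ : Type} {Fσ : ℱ → ((Fin d → ℝ) →ₗ[ℝ] ℝ)}

theorem convex_orthant : Convex ℝ (orthant ℱ) :=
  fun _ hx _ hy _ _ ha hb _ σ => add_nonneg (mul_nonneg ha (hx σ)) (mul_nonneg hb (hy σ))

theorem smul_orthant_subset {c : ℝ} (hc : 0 ≤ c) : c • orthant ℱ ⊆ orthant ℱ :=
  smul_set_subset_iff.2 fun _ hx σ => mul_nonneg hc (hx σ)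

theorem isOpen_setOf_forall_pos [Finite ℱ] : IsOpen {x : ℱ → ℝ | ∀ σ, 0 < x σ} := by
  simpa [Set.pi] using isOpen_set_pi (s := fun (_ : ℱ) => Ioi (0 : ℝ)) finite_univ
    fun _ _ => isOpen_Ioi

theorem image_Fmap_coneC :
    Fmap Fσ '' coneC Fσ = (LinearMap.range (Fmap Fσ) : Set (ℱ → ℝ)) ∩ orthant ℱ := by
  ext x
  constructor
  · rintro ⟨p, hp, rfl⟩
    exact ⟨⟨p, rfl⟩, hp⟩
  · rintro ⟨⟨p, rfl⟩, hx⟩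
    exact ⟨p, hx, rfl⟩

theorem pos_of_mem_interior_coneC {σ : ℱ} (hσ : Fσ σ ≠ 0) {p : Fin d → ℝ}
    (hp : p ∈ interior (coneC Fσ)) : 0 < Fσ σ p := by
  have hopen : IsOpenMap (Fσ σ) :=
    (Fσ σ).isOpenMap_of_finiteDimensional (LinearMap.surjective_of_ne_zero hσ)
  have hint : interior (coneC Fσ) ⊆ Fσ σ ⁻¹' interior (Ici 0) := by
    rw [hopen.preimage_interior_eq_interior_preimage (Fσ σ).continuous_of_finiteDimensional]
    exact interior_mono fun q hq => hq σ
  simpa using hint hp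

theorem newtonPFI_eq_range_inter_newtonPJ (β : Fin r → (Fin d → ℤ)) :
    newtonPFI Fσ β = (LinearMap.range (Fmap Fσ) : Set (ℱ → ℝ)) ∩ newtonPJ Fσ β := by
  set V := LinearMap.range (Fmap Fσ)
  have hvertices : convexHull ℝ (range fun i => Fmap Fσ (castR (β i))) ⊆ V :=
    convexHull_min (range_subset_iff.2 fun i => LinearMap.mem_range_self _ _) V.convex
  rw [newtonPFI, newtonPJ, image_Fmap_coneC,
    convexHull_iUnion_vadd _ (V.convex.inter convex_orthant),
    convexHull_iUnion_vadd _ convex_orthant, Submodule.add_inter_eq_inter_add hvertices]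

theorem newtonPJ_subset_orthant {β : Fin r → (Fin d → ℤ)}
    (hβ : ∀ i, castR (β i) ∈ coneC Fσ) : newtonPJ Fσ β ⊆ orthant ℱ := by
  refine convexHull_min (iUnion_subset fun i => ?_) convex_orthant
  rintro _ ⟨y, hy, rfl⟩ σ
  exact add_nonneg (hβ i σ) (hy σ)

theorem add_mem_interior_newtonPJ [Finite ℱ] (β : Fin r → (Fin d → ℤ)) (i : Fin r)
    {x : ℱ → ℝ} (hx : ∀ σ, 0 < x σ) : Fmap Fσ (castR (β i)) + x ∈ interior (newtonPJ Fσ β) := by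
  have hx' : x ∈ interior (orthant ℱ) :=
    interior_maximal (fun y hy σ => (hy σ).le) isOpen_setOf_forall_pos hx
  refine interior_mono ((subset_iUnion (fun i => Fmap Fσ (castR (β i)) +ᵥ orthant ℱ) i).trans
    (subset_convexHull ℝ _)) ?_
  rw [interior_vadd]
  exact vadd_mem_vadd_set hx'

end NewtonPolyhedra

theorem stmt3_general (d : ℕ) (ℱ : Type) [Fintype ℱ]
    (Fσ : ℱ → ((Fin d → ℝ) →ₗ[ℝ] ℝ))
    (hFsurj : ∀ σ (z : ℤ), ∃ v : Fin d → ℤ, Fσ σ (castR v) = z)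
    (hfull : (interior (coneC Fσ)).Nonempty)
    (r : ℕ) (hr : 1 ≤ r) (β : Fin r → (Fin d → ℤ))
    (hβ : ∀ i, castR (β i) ∈ coneC Fσ)
    (α : ℚ) (hα : 0 < α) :
    intrinsicInterior ℝ ((α : ℝ) • newtonPFI Fσ β) =
      (Fmap Fσ '' coneC Fσ) ∩ interior ((α : ℝ) • newtonPJ Fσ β) := by
  set V := LinearMap.range (Fmap Fσ)
  have hα' : (α : ℝ) ≠ 0 := by exact_mod_cast hα.ne'
  obtain ⟨p, hp⟩ := hfull
  have hFσ : ∀ σ, Fσ σ ≠ 0 := fun σ h => by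
    obtain ⟨v, hv⟩ := hFsurj σ 1
    simp [h] at hv
  have hFp : ∀ σ, 0 < Fmap Fσ p σ := fun σ => pos_of_mem_interior_coneC (hFσ σ) hp
  have hmeet : ((V : Set (ℱ → ℝ)) ∩ interior ((α : ℝ) • newtonPJ Fσ β)).Nonempty := by
    refine ⟨(α : ℝ) • (Fmap Fσ (castR (β ⟨0, hr⟩)) + Fmap Fσ p), ?_, ?_⟩
    · exact V.smul_mem _ (add_mem (LinearMap.mem_range_self _ _) (LinearMap.mem_range_self _ _))
    · rw [interior_smul₀ hα']
      exact smul_mem_smul_set (add_mem_interior_newtonPJ β _ hFp)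
  have hpos : interior ((α : ℝ) • newtonPJ Fσ β) ⊆ orthant ℱ :=
    interior_subset.trans ((smul_set_mono (newtonPJ_subset_orthant hβ)).trans
      (smul_orthant_subset (by exact_mod_cast hα.le)))
  have hconvex : Convex ℝ ((α : ℝ) • newtonPJ Fσ β) := (convex_convexHull ℝ _).smul _
  rw [newtonPFI_eq_range_inter_newtonPJ, smul_set_inter₀ hα', V.smul_set_eq_self hα',
    V.intrinsicInterior_inter hconvex hmeet, image_Fmap_coneC,
    inter_assoc, inter_eq_right.2 hpos]

/-- for every positive rational `α`,
`relint(α P_{F(I)}) = F(C) ∩ interior(α P_J)`. -/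
theorem stmt3 (d : ℕ) (hd : 1 ≤ d) (ℱ : Type) [Fintype ℱ] [Nonempty ℱ]
    (Fσ : ℱ → ((Fin d → ℝ) →ₗ[ℝ] ℝ))
    (hFint : ∀ σ (v : Fin d → ℤ), ∃ z : ℤ, Fσ σ (castR v) = z)
    (hFsurj : ∀ σ (z : ℤ), ∃ v : Fin d → ℤ, Fσ σ (castR v) = z)
    (hFinj : Function.Injective (Fmap Fσ))
    (hfull : (interior (coneC Fσ)).Nonempty)
    (r : ℕ) (hr : 1 ≤ r) (β : Fin r → (Fin d → ℤ))
    (hβ : ∀ i, castR (β i) ∈ coneC Fσ)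
    (hmin : ∀ i j, i ≠ j → castR (β j - β i) ∉ coneC Fσ)
    (α : ℚ) (hα : 0 < α) :
    intrinsicInterior ℝ ((α : ℝ) • newtonPFI Fσ β) =
      (Fmap Fσ '' coneC Fσ) ∩ interior ((α : ℝ) • newtonPJ Fσ β) :=
  stmt3_general d ℱ Fσ hFsurj hfull r hr β hβ α hα
end

section
/- A point x ∈ ℝ^ℱ lies in the interior of the Newton polyhedron P_J if and only if there exists u in the convex hull of {F(β_1),…,F(β_r)} such that every coordinate of x − u is strictly positive, i.e., x − u ∈ interior(ℝ_{≥0}^ℱ). -/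
open Pointwise

/-- a point `x ∈ ℝ^ℱ` lies in the interior of `P_J` iff there exists `u` in the
convex hull of `{F(β₁),…,F(β_r)}` with every coordinate of `x - u` strictly positive. -/
theorem stmt4 (d : ℕ) (hd : 1 ≤ d) (ℱ : Type) [Fintype ℱ] [Nonempty ℱ]
    (Fσ : ℱ → ((Fin d → ℝ) →ₗ[ℝ] ℝ))
    (hFint : ∀ σ (v : Fin d → ℤ), ∃ z : ℤ, Fσ σ (castR v) = z)
    (hFsurj : ∀ σ (z : ℤ), ∃ v : Fin d → ℤ, Fσ σ (castR v) = z)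
    (hFinj : Function.Injective (Fmap Fσ))
    (hfull : (interior (coneC Fσ)).Nonempty)
    (r : ℕ) (hr : 1 ≤ r) (β : Fin r → (Fin d → ℤ))
    (hβ : ∀ i, castR (β i) ∈ coneC Fσ)
    (x : ℱ → ℝ) :
    x ∈ interior (newtonPJ Fσ β) ↔
      ∃ u ∈ convexHull ℝ (Set.range fun i => Fmap Fσ (castR (β i))),
        ∀ σ, 0 < x σ - u σ := by
  classical
  set A : Set (ℱ → ℝ) := Set.range fun i => Fmap Fσ (castR (β i)) with hA
  have horth : Convex ℝ (orthant ℱ) := by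
    intro a ha b hb s t hs ht hst σ
    exact add_nonneg (mul_nonneg hs (ha σ)) (mul_nonneg ht (hb σ))
  have hPJ : newtonPJ Fσ β = convexHull ℝ A + orthant ℱ := by
    have h1 : (⋃ i, Fmap Fσ (castR (β i)) +ᵥ orthant ℱ) = A + orthant ℱ := by
      ext y
      simp only [Set.mem_iUnion, Set.mem_vadd_set, Set.mem_add, hA, Set.mem_range]
      constructor
      · rintro ⟨i, w, hw, rfl⟩
        exact ⟨_, ⟨i, rfl⟩, w, hw, rfl⟩
      · rintro ⟨_, ⟨i, rfl⟩, w, hw, rfl⟩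
        exact ⟨i, w, hw, rfl⟩
    rw [newtonPJ, h1, convexHull_add, horth.convexHull_eq]
  constructor
  · intro hx
    -- move slightly in the direction -(1,…,1)
    have hg : Continuous fun t : ℝ => x - t • (1 : ℱ → ℝ) := by
      exact continuous_const.sub (continuous_id.smul continuous_const)
    have hmem : (fun t : ℝ => x - t • (1 : ℱ → ℝ)) ⁻¹' interior (newtonPJ Fσ β) ∈ nhds (0 : ℝ) :=
      (isOpen_interior.preimage hg).mem_nhds (by simpa using hx)
    obtain ⟨ε, hε, hball⟩ := Metric.mem_nhds_iff.mp hmem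
    have ht : (ε / 2 : ℝ) ∈ Metric.ball (0 : ℝ) ε := by
      rw [Metric.mem_ball, Real.dist_eq, sub_zero, abs_of_pos (half_pos hε)]
      exact half_lt_self hε
    have hxt : x - (ε / 2) • (1 : ℱ → ℝ) ∈ newtonPJ Fσ β := interior_subset (hball ht)
    rw [hPJ] at hxt
    obtain ⟨u, hu, w, hw, huw⟩ := hxt
    refine ⟨u, hu, fun σ => ?_⟩
    have h2 : u σ + w σ = x σ - ε / 2 := by simpa using congrFun huw σ
    have hx' : x σ - u σ = ε / 2 + w σ := by linarith
    rw [hx']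
    have := hw σ
    linarith [half_pos hε]
  · rintro ⟨u, hu, hpos⟩
    set S : Set (ℱ → ℝ) := {y | ∀ σ, 0 < y σ} with hS
    have hSopen : IsOpen S := by
      have : S = ⋂ σ, (fun y : ℱ → ℝ => y σ) ⁻¹' Set.Ioi 0 := by
        ext y; simp [hS]
      rw [this]
      exact isOpen_iInter_of_finite fun σ => (isOpen_Ioi).preimage (continuous_apply σ)
    have hUopen : IsOpen (convexHull ℝ A + S) := hSopen.add_left
    have hUsub : convexHull ℝ A + S ⊆ newtonPJ Fσ β := by
      rw [hPJ]
      exact Set.add_subset_add_left fun y hy σ => (hy σ).le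
    have hxU : x ∈ convexHull ℝ A + S :=
      ⟨u, hu, x - u, fun σ => hpos σ, by ring_nf⟩
    exact interior_maximal hUsub hUopen hxU
end

section
/- A point x ∈ ℝ^ℱ lies in the relative (intrinsic) interior of the Newton polyhedron P_{F(I)} if and only if there exists u in the convex hull of {F(β_1),…,F(β_r)} such that x − u lies in the relative (intrinsic) interior of the cone F(C); equivalently, x − u = F(p) for some p ∈ ℝ^d with F_σ(p) > 0 for all σ ∈ ℱ. -/
open Pointwise

section Aux

open Pointwise

variable {E : Type*} [NormedAddCommGroup E] [NormedSpace ℝ E]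

lemma mem_ri_iff {s : Set E} {x : E} :
    x ∈ intrinsicInterior ℝ s ↔
      x ∈ (affineSpan ℝ s : Set E) ∧
        ∃ U : Set E, IsOpen U ∧ x ∈ U ∧ U ∩ (affineSpan ℝ s : Set E) ⊆ s := by
  constructor
  · rintro ⟨y, hy, rfl⟩
    obtain ⟨t, hts, ht, hyt⟩ := mem_interior.mp hy
    obtain ⟨U, hU, rfl⟩ := isOpen_induced_iff.mp ht
    exact ⟨y.2, U, hU, hyt, fun z hz => hts (show (⟨z, hz.2⟩ : affineSpan ℝ s) ∈ _ from hz.1)⟩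
  · rintro ⟨hx, U, hU, hxU, hUs⟩
    refine ⟨⟨x, hx⟩, mem_interior.mpr ⟨Subtype.val ⁻¹' U, fun z hz => hUs ⟨hz, z.2⟩,
      hU.preimage continuous_subtype_val, hxU⟩, rfl⟩

lemma ri_eq_interior_of_span_top {s : Set E} (h : affineSpan ℝ s = ⊤) :
    intrinsicInterior ℝ s = interior s := by
  ext x
  rw [mem_ri_iff, h]
  simp only [AffineSubspace.top_coe, Set.mem_univ, true_and, Set.inter_univ]
  rw [mem_interior]
  exact ⟨fun ⟨U, h1, h2, h3⟩ => ⟨U, h3, h1, h2⟩, fun ⟨U, h3, h1, h2⟩ => ⟨U, h1, h2, h3⟩⟩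

open Topology

lemma span_image {d : ℕ} {ℱ : Type} [Fintype ℱ] (f : (Fin d → ℝ) →ₗ[ℝ] (ℱ → ℝ))
    (s : Set (Fin d → ℝ)) :
    (affineSpan ℝ (f '' s) : Set (ℱ → ℝ)) = f '' (affineSpan ℝ s : Set (Fin d → ℝ)) := by
  have h : f '' s = f.toAffineMap '' s := by simp
  rw [h, ← AffineSubspace.map_span f.toAffineMap s, AffineSubspace.coe_map]
  simp

lemma ri_image {d : ℕ} {ℱ : Type} [Fintype ℱ] (f : (Fin d → ℝ) →ₗ[ℝ] (ℱ → ℝ))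
    (hf : Function.Injective f) (s : Set (Fin d → ℝ)) :
    intrinsicInterior ℝ (f '' s) = f '' intrinsicInterior ℝ s := by
  have hemb : Topology.IsEmbedding f :=
    (LinearMap.isClosedEmbedding_of_injective (LinearMap.ker_eq_bot.mpr hf)).toIsEmbedding
  apply Set.Subset.antisymm
  · intro x hx
    rw [mem_ri_iff] at hx
    obtain ⟨hxspan, U, hU, hxU, hUs⟩ := hx
    rw [span_image] at hxspan
    obtain ⟨y, hy, rfl⟩ := hxspan
    refine ⟨y, mem_ri_iff.mpr ⟨hy, f ⁻¹' U, hU.preimage hemb.continuous, hxU, ?_⟩, rfl⟩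
    rintro z ⟨hzU, hzs⟩
    have : f z ∈ U ∩ (affineSpan ℝ (f '' s) : Set (ℱ → ℝ)) := by
      rw [span_image]; exact ⟨hzU, ⟨z, hzs, rfl⟩⟩
    obtain ⟨w, hw, hwz⟩ := hUs this
    exact hf hwz ▸ hw
  · rintro x ⟨y, hy, rfl⟩
    rw [mem_ri_iff] at hy
    obtain ⟨hyspan, U, hU, hyU, hUs⟩ := hy
    obtain ⟨V, hV, rfl⟩ := hemb.toIsInducing.isOpen_iff.mp hU
    refine mem_ri_iff.mpr ⟨by rw [span_image]; exact ⟨y, hyspan, rfl⟩, V, hV, hyU, ?_⟩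
    rintro z ⟨hzV, hzs⟩
    rw [span_image] at hzs
    obtain ⟨w, hw, rfl⟩ := hzs
    exact ⟨w, hUs ⟨hzV, hw⟩, rfl⟩

lemma interior_add_cone {E : Type*} [NormedAddCommGroup E] [NormedSpace ℝ E]
    (K C : Set E) (hCadd : ∀ a ∈ C, ∀ b ∈ C, a + b ∈ C)
    (hCsmul : ∀ (t : ℝ), 0 < t → ∀ a ∈ C, t • a ∈ C)
    (hne : (interior C).Nonempty) :
    interior (K + C) = K + interior C := by
  obtain ⟨e, he⟩ := hne
  have hsub : ∀ c ∈ C, ∀ y ∈ interior C, c + y ∈ interior C := by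
    intro c hc y hy
    have hopen : IsOpen ((c + ·) '' interior C) := (isOpenMap_add_left c) _ isOpen_interior
    have : (c + ·) '' interior C ⊆ C := by
      rintro _ ⟨z, hz, rfl⟩; exact hCadd c hc z (interior_subset hz)
    exact interior_maximal this hopen ⟨y, hy, rfl⟩
  apply Set.Subset.antisymm
  · intro x hx
    obtain ⟨ε, hε, hball⟩ := Metric.mem_nhds_iff.mp (mem_interior_iff_mem_nhds.mp hx)
    set δ : ℝ := ε / (2 * (‖e‖ + 1)) with hδdef
    have hδ : 0 < δ := by positivity
    have hmem : x - δ • e ∈ K + C := by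
      apply hball
      rw [Metric.mem_ball, dist_eq_norm, sub_sub_cancel_left, norm_neg, norm_smul,
        Real.norm_of_nonneg hδ.le]
      calc δ * ‖e‖ ≤ δ * (‖e‖ + 1) := by nlinarith [norm_nonneg e]
        _ = ε / 2 := by rw [hδdef]; field_simp
        _ < ε := by linarith
    obtain ⟨u, hu, c, hc, huc⟩ := Set.mem_add.mp hmem
    have hδe : δ • e ∈ interior C := by
      have hopen : IsOpen (δ • interior C) := isOpen_interior.smul₀ hδ.ne'
      have hsubC : δ • interior C ⊆ C := by
        rintro _ ⟨z, hz, rfl⟩; exact hCsmul δ hδ z (interior_subset hz)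
      exact interior_maximal hsubC hopen ⟨e, he, rfl⟩
    refine Set.mem_add.mpr ⟨u, hu, c + δ • e, hsub c hc _ hδe, ?_⟩
    rw [← add_assoc, huc]; abel
  · intro x hx
    obtain ⟨u, hu, c, hc, huc⟩ := Set.mem_add.mp hx
    have hopen : IsOpen ((u + ·) '' interior C) := (isOpenMap_add_left u) _ isOpen_interior
    have hsubKC : (u + ·) '' interior C ⊆ K + C := by
      rintro _ ⟨z, hz, rfl⟩; exact Set.mem_add.mpr ⟨u, hu, z, interior_subset hz, rfl⟩
    exact interior_maximal hsubKC hopen ⟨c, hc, huc⟩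

lemma coneC_add {d : ℕ} {ℱ : Type} (Fσ : ℱ → ((Fin d → ℝ) →ₗ[ℝ] ℝ)) :
    ∀ a ∈ coneC Fσ, ∀ b ∈ coneC Fσ, a + b ∈ coneC Fσ := fun a ha b hb σ => by
  simpa using add_nonneg (ha σ) (hb σ)

lemma coneC_smul {d : ℕ} {ℱ : Type} (Fσ : ℱ → ((Fin d → ℝ) →ₗ[ℝ] ℝ)) :
    ∀ (t : ℝ), 0 < t → ∀ a ∈ coneC Fσ, t • a ∈ coneC Fσ := fun t ht a ha σ => by
  simpa using mul_nonneg ht.le (ha σ)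

lemma coneC_convex {d : ℕ} {ℱ : Type} (Fσ : ℱ → ((Fin d → ℝ) →ₗ[ℝ] ℝ)) :
    Convex ℝ (coneC Fσ) := by
  intro a ha b hb s t hs ht hst σ
  simp only [map_add, map_smul, smul_eq_mul]
  have := ha σ; have := hb σ
  positivity

lemma interior_coneC {d : ℕ} {ℱ : Type} [Fintype ℱ] (Fσ : ℱ → ((Fin d → ℝ) →ₗ[ℝ] ℝ))
    (hmem : ∀ σ, ∃ w : Fin d → ℝ, Fσ σ w = 1) :
    interior (coneC Fσ) = {p | ∀ σ, 0 < Fσ σ p} := by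
  apply Set.Subset.antisymm
  · intro p hp σ
    by_contra hle
    push_neg at hle
    have h0 : Fσ σ p = 0 := le_antisymm hle ((interior_subset hp) σ)
    obtain ⟨ε, hε, hball⟩ := Metric.mem_nhds_iff.mp (mem_interior_iff_mem_nhds.mp hp)
    obtain ⟨w, hw⟩ := hmem σ
    set t : ℝ := ε / (2 * (‖w‖ + 1)) with htdef
    have ht : 0 < t := by positivity
    have hmem2 : p - t • w ∈ coneC Fσ := by
      apply hball
      rw [Metric.mem_ball, dist_eq_norm, sub_sub_cancel_left, norm_neg, norm_smul,
        Real.norm_of_nonneg ht.le]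
      calc t * ‖w‖ ≤ t * (‖w‖ + 1) := by nlinarith [norm_nonneg w]
        _ = ε / 2 := by rw [htdef]; field_simp
        _ < ε := by linarith
    have h3 := hmem2 σ
    rw [map_sub, map_smul, h0, hw, smul_eq_mul, mul_one, zero_sub] at h3
    linarith
  · intro p hp
    have hopen : IsOpen {q : Fin d → ℝ | ∀ σ, 0 < Fσ σ q} := by
      have h : {q : Fin d → ℝ | ∀ σ, 0 < Fσ σ q} = ⋂ σ, (Fσ σ) ⁻¹' Set.Ioi 0 := by
        ext q; simp [Set.mem_iInter]
      rw [h]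
      exact isOpen_iInter_of_finite fun σ =>
        isOpen_Ioi.preimage (Fσ σ).continuous_of_finiteDimensional
    have hsubset : {q : Fin d → ℝ | ∀ σ, 0 < Fσ σ q} ⊆ coneC Fσ := fun q hq σ => (hq σ).le
    exact interior_maximal hsubset hopen hp

lemma newtonPI_eq {d r : ℕ} {ℱ : Type} (Fσ : ℱ → ((Fin d → ℝ) →ₗ[ℝ] ℝ))
    (β : Fin r → (Fin d → ℤ)) :
    newtonPI Fσ β = convexHull ℝ (Set.range fun i => castR (β i)) + coneC Fσ := by
  have hU : (⋃ i, castR (β i) +ᵥ coneC Fσ)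
      = (Set.range fun i => castR (β i)) + coneC Fσ := by
    ext z
    simp only [Set.mem_iUnion, Set.mem_vadd_set, Set.mem_add, Set.mem_range]
    constructor
    · rintro ⟨i, y, hy, rfl⟩
      exact ⟨castR (β i), ⟨i, rfl⟩, y, hy, rfl⟩
    · rintro ⟨a, ⟨i, rfl⟩, y, hy, rfl⟩
      exact ⟨i, y, hy, rfl⟩
  rw [newtonPI, hU, convexHull_add, (coneC_convex Fσ).convexHull_eq]

lemma newtonPFI_eq {d r : ℕ} {ℱ : Type} [Fintype ℱ] (Fσ : ℱ → ((Fin d → ℝ) →ₗ[ℝ] ℝ))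
    (β : Fin r → (Fin d → ℤ)) :
    newtonPFI Fσ β = Fmap Fσ '' newtonPI Fσ β := by
  rw [newtonPI, newtonPFI, LinearMap.image_convexHull, Set.image_iUnion]
  congr 1
  ext z
  simp only [Set.mem_iUnion, Set.mem_vadd_set, Set.mem_image]
  constructor
  · rintro ⟨i, y, ⟨c, hc, rfl⟩, rfl⟩
    exact ⟨i, castR (β i) + c, ⟨c, hc, rfl⟩, by simp [vadd_eq_add, map_add]⟩
  · rintro ⟨i, y, ⟨c, hc, rfl⟩, rfl⟩
    exact ⟨i, Fmap Fσ c, ⟨c, hc, rfl⟩, by simp [vadd_eq_add, map_add]⟩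

end Aux
/-- a point `x ∈ ℝ^ℱ` lies in the relative (intrinsic) interior of `P_{F(I)}` iff
there exists `u` in the convex hull of `{F(β₁),…,F(β_r)}` with `x - u` in the relative
(intrinsic) interior of the cone `F(C)`; equivalently, `x - u = F(p)` for some `p` with
`F_σ(p) > 0` for all `σ`. -/
theorem stmt5 (d : ℕ) (hd : 1 ≤ d) (ℱ : Type) [Fintype ℱ] [Nonempty ℱ]
    (Fσ : ℱ → ((Fin d → ℝ) →ₗ[ℝ] ℝ))
    (hFint : ∀ σ (v : Fin d → ℤ), ∃ z : ℤ, Fσ σ (castR v) = z)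
    (hFsurj : ∀ σ (z : ℤ), ∃ v : Fin d → ℤ, Fσ σ (castR v) = z)
    (hFinj : Function.Injective (Fmap Fσ))
    (hfull : (interior (coneC Fσ)).Nonempty)
    (r : ℕ) (hr : 1 ≤ r) (β : Fin r → (Fin d → ℤ))
    (hβ : ∀ i, castR (β i) ∈ coneC Fσ)
    (x : ℱ → ℝ) :
    (x ∈ intrinsicInterior ℝ (newtonPFI Fσ β) ↔
      ∃ u ∈ convexHull ℝ (Set.range fun i => Fmap Fσ (castR (β i))),
        x - u ∈ intrinsicInterior ℝ (Fmap Fσ '' coneC Fσ)) ∧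
    (x ∈ intrinsicInterior ℝ (newtonPFI Fσ β) ↔
      ∃ u ∈ convexHull ℝ (Set.range fun i => Fmap Fσ (castR (β i))),
        ∃ p : Fin d → ℝ, (∀ σ, 0 < Fσ σ p) ∧ x - u = Fmap Fσ p) := by
    classical
  have hmem1 : ∀ σ, ∃ w : Fin d → ℝ, Fσ σ w = 1 := fun σ => by
    obtain ⟨v, hv⟩ := hFsurj σ 1
    exact ⟨castR v, by rw [hv]; norm_num⟩
  have hIntC := interior_coneC Fσ hmem1
  have hPI := newtonPI_eq Fσ β
  have hPFI := newtonPFI_eq Fσ β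
  set K := convexHull ℝ (Set.range fun i => castR (β i)) with hKdef
  have hIntPI : interior (newtonPI Fσ β) = K + interior (coneC Fσ) := by
    rw [hPI]; exact interior_add_cone _ _ (coneC_add Fσ) (coneC_smul Fσ) hfull
  obtain ⟨e, he⟩ := hfull
  have hi0 : castR (β ⟨0, hr⟩) ∈ K := subset_convexHull ℝ _ ⟨⟨0, hr⟩, rfl⟩
  have hPIint_ne : (interior (newtonPI Fσ β)).Nonempty := by
    rw [hIntPI]
    exact ⟨_, Set.mem_add.mpr ⟨_, hi0, e, he, rfl⟩⟩
  have hPIconv : Convex ℝ (newtonPI Fσ β) := convex_convexHull ℝ _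
  have hspanPI : affineSpan ℝ (newtonPI Fσ β) = ⊤ :=
    (hPIconv.interior_nonempty_iff_affineSpan_eq_top).mp hPIint_ne
  have hspanC : affineSpan ℝ (coneC Fσ) = ⊤ :=
    ((coneC_convex Fσ).interior_nonempty_iff_affineSpan_eq_top).mp ⟨e, he⟩
  have riPFI : intrinsicInterior ℝ (newtonPFI Fσ β)
      = Fmap Fσ '' (K + interior (coneC Fσ)) := by
    rw [hPFI, ri_image _ hFinj, ri_eq_interior_of_span_top hspanPI, hIntPI]
  have riFC : intrinsicInterior ℝ (Fmap Fσ '' coneC Fσ)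
      = Fmap Fσ '' interior (coneC Fσ) := by
    rw [ri_image _ hFinj, ri_eq_interior_of_span_top hspanC]
  have hKimage : convexHull ℝ (Set.range fun i => Fmap Fσ (castR (β i)))
      = Fmap Fσ '' K := by
    rw [hKdef, LinearMap.image_convexHull]
    congr 1
    ext z
    simp
  have h1 : x ∈ intrinsicInterior ℝ (newtonPFI Fσ β) ↔
      ∃ u ∈ convexHull ℝ (Set.range fun i => Fmap Fσ (castR (β i))),
        x - u ∈ intrinsicInterior ℝ (Fmap Fσ '' coneC Fσ) := by
    rw [riPFI, riFC, hKimage]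
    constructor
    · rintro ⟨y, hy, rfl⟩
      obtain ⟨u, hu, c, hc, rfl⟩ := Set.mem_add.mp hy
      exact ⟨Fmap Fσ u, ⟨u, hu, rfl⟩, c, hc, by rw [map_add]; abel⟩
    · rintro ⟨u, ⟨u', hu', rfl⟩, c, hc, hxc⟩
      refine ⟨u' + c, Set.mem_add.mpr ⟨u', hu', c, hc, rfl⟩, ?_⟩
      rw [map_add, hxc]; abel
  refine ⟨h1, h1.trans ?_⟩
  apply exists_congr; intro u
  apply and_congr_right; intro hu
  rw [riFC, hIntC]
  constructor
  · rintro ⟨p, hp, hfp⟩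
    exact ⟨p, hp, hfp.symm⟩
  · rintro ⟨p, hp, hfp⟩
    exact ⟨p, hp, hfp.symm⟩
end

section
/- Suppose there exists w₀ ∈ ℚ^d with F_σ(w₀) = −1 for every σ ∈ ℱ (the ℚ-Gorenstein case). Then for every positive rational number α, the union ⋃ {w + interior(α·P_I) : w ∈ ℚ^d, F_σ(w) ≥ −1 for all σ ∈ ℱ} equals w₀ + interior(α·P_I). (In the notation of the paper, Ω_{αI} = Ω_{F^{-1}(−e), αI}.) -/
open Pointwise

/-- A vector of `ℝ^d` with all coordinates rational (`w ∈ ℚ^d`). -/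
def isRatVec {d : ℕ} (w : Fin d → ℝ) : Prop := ∀ i, ∃ q : ℚ, w i = (q : ℝ)


lemma PI_vadd {d r : ℕ} {ℱ : Type} (Fσ : ℱ → ((Fin d → ℝ) →ₗ[ℝ] ℝ))
    (β : Fin r → (Fin d → ℤ)) {c : Fin d → ℝ} (hc : c ∈ coneC Fσ) :
    c +ᵥ newtonPI Fσ β ⊆ newtonPI Fσ β := by
  unfold newtonPI
  rw [← convexHull_vadd]
  apply convexHull_mono
  rw [Set.vadd_set_iUnion]
  refine Set.iUnion_subset fun i => ?_
  rintro x ⟨y, ⟨z, hz, rfl⟩, rfl⟩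
  refine Set.mem_iUnion.2 ⟨i, ⟨c + z, fun σ => ?_, ?_⟩⟩
  · simp only [map_add]; exact add_nonneg (hc σ) (hz σ)
  · simp [vadd_eq_add]; abel

lemma smulPI_vadd {d r : ℕ} {ℱ : Type} (Fσ : ℱ → ((Fin d → ℝ) →ₗ[ℝ] ℝ))
    (β : Fin r → (Fin d → ℤ)) {c : Fin d → ℝ} (hc : c ∈ coneC Fσ)
    {a : ℝ} (ha : 0 < a) :
    c +ᵥ (a • newtonPI Fσ β) ⊆ a • newtonPI Fσ β := by
  rintro x ⟨y, ⟨p, hp, rfl⟩, rfl⟩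
  refine ⟨a⁻¹ • c + p, PI_vadd Fσ β (fun σ => ?_) ⟨p, hp, rfl⟩, ?_⟩
  · simp only [map_smul, smul_eq_mul]
    exact mul_nonneg (inv_nonneg.2 ha.le) (hc σ)
  · simp [smul_add, smul_smul, mul_inv_cancel₀ ha.ne', vadd_eq_add]

/-- in the ℚ-Gorenstein case (there is `w₀ ∈ ℚ^d` with `F_σ(w₀) = -1` for all
`σ`), for every positive rational `α` the union
`⋃ {w + interior(α P_I) : w ∈ ℚ^d, F_σ(w) ≥ -1 ∀σ}` equals `w₀ + interior(α P_I)`. -/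
theorem stmt8 (d : ℕ) (hd : 1 ≤ d) (ℱ : Type) [Fintype ℱ] [Nonempty ℱ]
    (Fσ : ℱ → ((Fin d → ℝ) →ₗ[ℝ] ℝ))
    (hFint : ∀ σ (v : Fin d → ℤ), ∃ z : ℤ, Fσ σ (castR v) = z)
    (hFsurj : ∀ σ (z : ℤ), ∃ v : Fin d → ℤ, Fσ σ (castR v) = z)
    (hFinj : Function.Injective (Fmap Fσ))
    (hfull : (interior (coneC Fσ)).Nonempty)
    (r : ℕ) (hr : 1 ≤ r) (β : Fin r → (Fin d → ℤ))
    (hβ : ∀ i, castR (β i) ∈ coneC Fσ)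
    (w₀ : Fin d → ℝ) (hw₀rat : isRatVec w₀) (hw₀ : ∀ σ, Fσ σ w₀ = -1)
    (α : ℚ) (hα : 0 < α) :
    {x : Fin d → ℝ | ∃ w : Fin d → ℝ, isRatVec w ∧ (∀ σ, -1 ≤ Fσ σ w) ∧
        x - w ∈ interior ((α : ℝ) • newtonPI Fσ β)} =
      {x : Fin d → ℝ | x - w₀ ∈ interior ((α : ℝ) • newtonPI Fσ β)} := by
  have hαpos : (0:ℝ) < (α:ℝ) := by exact_mod_cast hα
  ext x
  simp only [Set.mem_setOf_eq]
  constructor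
  · rintro ⟨w, hwrat, hw, hxw⟩
    have hc : w - w₀ ∈ coneC Fσ := fun σ => by
      simp only [map_sub, hw₀ σ]
      linarith [hw σ]
    have key : (w - w₀) +ᵥ interior ((α:ℝ) • newtonPI Fσ β)
        ⊆ interior ((α:ℝ) • newtonPI Fσ β) := by
      rw [← interior_vadd]
      exact interior_mono (smulPI_vadd Fσ β hc hαpos)
    have : x - w₀ = (w - w₀) +ᵥ (x - w) := by simp only [vadd_eq_add]; abel
    rw [this]
    exact key ⟨x - w, hxw, rfl⟩
  · intro hx
    exact ⟨w₀, hw₀rat, fun σ => by rw [hw₀ σ], hx⟩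
end

section
/- Suppose there exists w₀ ∈ ℚ^d with F_σ(w₀) = −1 for every σ ∈ ℱ (the ℚ-Gorenstein case). Then for every positive rational number α and every lattice point v ∈ C ∩ ℤ^d, the following are equivalent: (1) there exists w ∈ ℚ^d with F_σ(w) ≥ −1 for all σ ∈ ℱ and v − w ∈ interior(α·P_I); (2) F(v) + e lies in the relative (intrinsic) interior of α·P_{F(I)}. (This is the combinatorial content of the toric Howald formula 𝒥(X, αI) = ⟨ y^v : F(v)+e ∈ relint(α P_{F(I)}) ⟩ in the ℚ-Gorenstein case.) -/
open Pointwise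

/-!
Since `F` is injective, `P_{F(I)} = F(P_I)`, and as `α • P_I` is full-dimensional, `F` maps its
interior homeomorphically onto the relative interior of `α • P_{F(I)}`. In the ℚ-Gorenstein case
`F(v) + e = F(v - w₀)`, so condition (2) says exactly `v - w₀ ∈ interior (α • P_I)`. This is (1) for
`w = w₀`; conversely any admissible `w` satisfies `w - w₀ ∈ C`, and the interior of `α • P_I` is
stable under translation by `C`.
-/

open Set

theorem add_mem_interior_of_forall_add_mem {E : Type*} [TopologicalSpace E] [AddGroup E]
    [ContinuousAdd E] {s : Set E} {c : E} (h : ∀ x ∈ s, x + c ∈ s) {x : E}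
    (hx : x ∈ interior s) : x + c ∈ interior s :=
  interior_mono (image_subset_iff.mpr h)
    ((isOpenMap_add_right c).image_interior_subset s (mem_image_of_mem _ hx))

section IntrinsicInterior

variable {E F : Type*} [AddCommGroup E] [Module ℝ E] [TopologicalSpace E]
  [IsTopologicalAddGroup E] [ContinuousSMul ℝ E] [T2Space E] [FiniteDimensional ℝ E]
  [AddCommGroup F] [Module ℝ F] [TopologicalSpace F] [IsTopologicalAddGroup F]
  [ContinuousSMul ℝ F] [T2Space F]

/-- An injective linear map out of a finite-dimensional space is a homeomorphism onto its range,
which is the affine span of the image of a spanning set. -/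
theorem LinearMap.intrinsicInterior_image_of_injective (f : E →ₗ[ℝ] F)
    (hf : Function.Injective f) {s : Set E} (hs : affineSpan ℝ s = ⊤) :
    intrinsicInterior ℝ (f '' s) = f '' interior s := by
  have hspan : (affineSpan ℝ (f '' s) : Set F) = LinearMap.range f := by
    rw [show f '' s = f.toAffineMap '' s from rfl, ← AffineSubspace.map_span, hs,
      AffineSubspace.coe_map, AffineSubspace.top_coe, image_univ, LinearMap.coe_range]
    rfl
  let H : E ≃ₜ affineSpan ℝ (f '' s) :=
    (LinearEquiv.ofInjective f hf).toContinuousLinearEquiv.toHomeomorph.trans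
      (Homeomorph.setCongr hspan.symm)
  have hH : ∀ x, (H x : F) = f x := fun _ => rfl
  have hpre : ((↑) ⁻¹' (f '' s) : Set (affineSpan ℝ (f '' s))) = H '' s := by
    ext y
    refine ⟨fun ⟨x, hx, hxy⟩ => ⟨x, hx, Subtype.ext (hxy ▸ hH x)⟩, ?_⟩
    rintro ⟨x, hx, rfl⟩
    exact ⟨x, hx, (hH x).symm⟩
  rw [intrinsicInterior, hpre, ← H.image_interior, image_image]
  exact image_congr fun x _ => hH x

end IntrinsicInterior

section NewtonPolyhedron

variable {d r : ℕ} {ℱ : Type} {Fσ : ℱ → ((Fin d → ℝ) →ₗ[ℝ] ℝ)}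

theorem add_mem_coneC {a b : Fin d → ℝ} (ha : a ∈ coneC Fσ) (hb : b ∈ coneC Fσ) :
    a + b ∈ coneC Fσ := fun σ => by
  rw [map_add]; exact add_nonneg (ha σ) (hb σ)

theorem smul_mem_coneC {a : Fin d → ℝ} (ha : a ∈ coneC Fσ) {c : ℝ} (hc : 0 ≤ c) :
    c • a ∈ coneC Fσ := fun σ => by
  rw [map_smul]; exact mul_nonneg hc (ha σ)

theorem newtonPFI_eq_image (β : Fin r → (Fin d → ℤ)) :
    newtonPFI Fσ β = Fmap Fσ '' newtonPI Fσ β := by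
  simp only [newtonPFI, newtonPI, LinearMap.image_convexHull, image_iUnion, image_vadd_distrib]

theorem add_mem_newtonPI {β : Fin r → (Fin d → ℤ)} {x c : Fin d → ℝ}
    (hx : x ∈ newtonPI Fσ β) (hc : c ∈ coneC Fσ) : x + c ∈ newtonPI Fσ β := by
  have hsub : c +ᵥ ⋃ i, castR (β i) +ᵥ coneC Fσ ⊆ ⋃ i, castR (β i) +ᵥ coneC Fσ := by
    simp only [vadd_set_iUnion, iUnion_subset_iff]
    rintro i _ ⟨_, ⟨c₀, hc₀, rfl⟩, rfl⟩
    refine mem_iUnion_of_mem i ⟨c + c₀, add_mem_coneC hc hc₀, ?_⟩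
    simp only [vadd_eq_add]
    abel
  rw [newtonPI, ← vadd_mem_vadd_set_iff (a := c), ← convexHull_vadd] at hx
  exact convexHull_mono hsub (by simpa only [vadd_eq_add, add_comm] using hx)

theorem add_mem_interior_smul_newtonPI {β : Fin r → (Fin d → ℤ)} {a : ℝ} (ha : 0 < a)
    {x c : Fin d → ℝ} (hx : x ∈ interior (a • newtonPI Fσ β)) (hc : c ∈ coneC Fσ) :
    x + c ∈ interior (a • newtonPI Fσ β) := by
  refine add_mem_interior_of_forall_add_mem ?_ hx
  rintro _ ⟨p, hp, rfl⟩
  refine ⟨p + a⁻¹ • c, add_mem_newtonPI hp (smul_mem_coneC hc (inv_nonneg.mpr ha.le)), ?_⟩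
  simp only [smul_add, smul_inv_smul₀ ha.ne']

theorem vadd_interior_coneC_subset_interior_newtonPI (β : Fin r → (Fin d → ℤ)) (i : Fin r) :
    castR (β i) +ᵥ interior (coneC Fσ) ⊆ interior (newtonPI Fσ β) := by
  rw [← interior_vadd]
  exact interior_mono ((subset_iUnion (fun i => castR (β i) +ᵥ coneC Fσ) i).trans
    (subset_convexHull ℝ _))

theorem affineSpan_smul_newtonPI_eq_top (β : Fin r → (Fin d → ℤ)) (i : Fin r)
    (hfull : (interior (coneC Fσ)).Nonempty) {a : ℝ} (ha : a ≠ 0) :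
    affineSpan ℝ (a • newtonPI Fσ β) = ⊤ := by
  rw [newtonPI, ← ((convex_convexHull ℝ _).smul a).interior_nonempty_iff_affineSpan_eq_top,
    interior_smul₀ ha]
  exact ((hfull.vadd_set (a := castR (β i))).mono
    (vadd_interior_coneC_subset_interior_newtonPI β i)).smul_set

end NewtonPolyhedron

theorem stmt9_general (d : ℕ) (ℱ : Type)
    (Fσ : ℱ → ((Fin d → ℝ) →ₗ[ℝ] ℝ))
    (hFinj : Function.Injective (Fmap Fσ))
    (hfull : (interior (coneC Fσ)).Nonempty)
    (r : ℕ) (hr : 1 ≤ r) (β : Fin r → (Fin d → ℤ))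
    (w₀ : Fin d → ℝ) (hw₀rat : isRatVec w₀) (hw₀ : ∀ σ, Fσ σ w₀ = -1)
    (α : ℚ) (hα : 0 < α)
    (v : Fin d → ℤ) :
    (∃ w : Fin d → ℝ, isRatVec w ∧ (∀ σ, -1 ≤ Fσ σ w) ∧
        castR v - w ∈ interior ((α : ℝ) • newtonPI Fσ β)) ↔
      Fmap Fσ (castR v) + (fun _ => 1) ∈
        intrinsicInterior ℝ ((α : ℝ) • newtonPFI Fσ β) := by
  have hα' : (0 : ℝ) < α := by exact_mod_cast hα
  have hrelint : intrinsicInterior ℝ ((α : ℝ) • newtonPFI Fσ β)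
      = Fmap Fσ '' interior ((α : ℝ) • newtonPI Fσ β) := by
    rw [newtonPFI_eq_image, ← image_smul_set, (Fmap Fσ).intrinsicInterior_image_of_injective
      hFinj (affineSpan_smul_newtonPI_eq_top β ⟨0, hr⟩ hfull hα'.ne')]
  have hshift : Fmap Fσ (castR v) + (fun _ => 1) = Fmap Fσ (castR v - w₀) := by
    ext σ
    simp [Fmap, hw₀]
  rw [hrelint, hshift, hFinj.mem_set_image]
  refine ⟨?_, fun h => ⟨w₀, hw₀rat, fun σ => (hw₀ σ).ge, h⟩⟩
  rintro ⟨w, -, hw, hvw⟩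
  have hcone : w - w₀ ∈ coneC Fσ := fun σ => by
    rw [map_sub, hw₀ σ]
    linarith [hw σ]
  simpa using add_mem_interior_smul_newtonPI hα' hvw hcone

/-- in the ℚ-Gorenstein case, for every positive rational `α` and every lattice
point `v ∈ C ∩ ℤ^d`, there exists `w ∈ ℚ^d` with `F_σ(w) ≥ -1` for all `σ` and
`v - w ∈ interior(α P_I)` iff `F(v) + e ∈ relint(α P_{F(I)})`. -/
theorem stmt9 (d : ℕ) (hd : 1 ≤ d) (ℱ : Type) [Fintype ℱ] [Nonempty ℱ]
    (Fσ : ℱ → ((Fin d → ℝ) →ₗ[ℝ] ℝ))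
    (hFint : ∀ σ (v : Fin d → ℤ), ∃ z : ℤ, Fσ σ (castR v) = z)
    (hFsurj : ∀ σ (z : ℤ), ∃ v : Fin d → ℤ, Fσ σ (castR v) = z)
    (hFinj : Function.Injective (Fmap Fσ))
    (hfull : (interior (coneC Fσ)).Nonempty)
    (r : ℕ) (hr : 1 ≤ r) (β : Fin r → (Fin d → ℤ))
    (hβ : ∀ i, castR (β i) ∈ coneC Fσ)
    (w₀ : Fin d → ℝ) (hw₀rat : isRatVec w₀) (hw₀ : ∀ σ, Fσ σ w₀ = -1)
    (α : ℚ) (hα : 0 < α)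
    (v : Fin d → ℤ) (hv : castR v ∈ coneC Fσ) :
    (∃ w : Fin d → ℝ, isRatVec w ∧ (∀ σ, -1 ≤ Fσ σ w) ∧
        castR v - w ∈ interior ((α : ℝ) • newtonPI Fσ β)) ↔
      Fmap Fσ (castR v) + (fun _ => 1) ∈
        intrinsicInterior ℝ ((α : ℝ) • newtonPFI Fσ β) :=
  stmt9_general d ℱ Fσ hFinj hfull r hr β w₀ hw₀rat hw₀ α hα v
end

section
/- Let α be a positive rational number and let w ∈ ℚ^d satisfy F_σ(w) ≥ −1 for every σ ∈ ℱ. Then F(w + interior(α·P_I)) ⊆ −e + interior(α·P_J); that is, for every z ∈ interior(α·P_I), the point F(w) + F(z) + e lies in interior(α·P_J). -/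
open Pointwise

section Aux

open Pointwise

/-- Adding an orthant vector keeps you in `newtonPJ`. -/
lemma aux_newtonPJ_add_orthant {d r : ℕ} {ℱ : Type} (Fσ : ℱ → ((Fin d → ℝ) →ₗ[ℝ] ℝ))
    (β : Fin r → (Fin d → ℤ)) {q u : ℱ → ℝ} (hq : q ∈ newtonPJ Fσ β)
    (hu : u ∈ orthant ℱ) : u + q ∈ newtonPJ Fσ β := by
  have h1 : u + q ∈ u +ᵥ newtonPJ Fσ β := ⟨q, hq, rfl⟩
  have h2 : u +ᵥ newtonPJ Fσ β ⊆ newtonPJ Fσ β := by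
    unfold newtonPJ
    rw [← convexHull_vadd]
    apply convexHull_mono
    rintro x ⟨y, hy, rfl⟩
    simp only [Set.mem_iUnion] at hy ⊢
    obtain ⟨i, o, ho, rfl⟩ := hy
    exact ⟨i, u + o, fun σ => add_nonneg (hu σ) (ho σ), by
      simp [vadd_eq_add]; abel⟩
  exact h2 h1

lemma aux_smulPJ_add_orthant {d r : ℕ} {ℱ : Type} (Fσ : ℱ → ((Fin d → ℝ) →ₗ[ℝ] ℝ))
    (β : Fin r → (Fin d → ℤ)) {a : ℝ} (ha : 0 < a) {x u : ℱ → ℝ}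
    (hx : x ∈ a • newtonPJ Fσ β) (hu : u ∈ orthant ℱ) :
    u + x ∈ a • newtonPJ Fσ β := by
  obtain ⟨q, hq, rfl⟩ := hx
  refine ⟨a⁻¹ • u + q, aux_newtonPJ_add_orthant Fσ β hq (fun σ => ?_), ?_⟩
  · exact mul_nonneg (inv_nonneg.2 ha.le) (hu σ)
  · show a • (a⁻¹ • u + q) = u + a • q
    rw [smul_add, smul_smul, mul_inv_cancel₀ ha.ne', one_smul]

/-- A strictly positive translate of a point of `a • newtonPJ` is interior. -/
lemma aux_mem_interior {d r : ℕ} {ℱ : Type} [Fintype ℱ] (Fσ : ℱ → ((Fin d → ℝ) →ₗ[ℝ] ℝ))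
    (β : Fin r → (Fin d → ℤ)) {a : ℝ} (ha : 0 < a) {x y : ℱ → ℝ}
    (hx : x ∈ a • newtonPJ Fσ β) (hy : ∀ σ, 0 < y σ) :
    y + x ∈ interior (a • newtonPJ Fσ β) := by
  have hUopen : IsOpen {p : ℱ → ℝ | ∀ σ, x σ < p σ} := by
    have : {p : ℱ → ℝ | ∀ σ, x σ < p σ} = ⋂ σ, {p : ℱ → ℝ | x σ < p σ} := by
      ext p; simp
    rw [this]
    exact isOpen_iInter_of_finite fun σ =>
      isOpen_lt continuous_const (continuous_apply σ)
  refine mem_interior.2 ⟨{p : ℱ → ℝ | ∀ σ, x σ < p σ}, ?_, hUopen, ?_⟩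
  · intro p hp
    have : p = (p - x) + x := by ring_nf
    rw [this]
    exact aux_smulPJ_add_orthant Fσ β ha hx (fun σ => by
      have := hp σ; simp only [Pi.sub_apply]; linarith)
  · intro σ
    simp only [Set.mem_setOf_eq, Pi.add_apply]
    linarith [hy σ]

/-- `F` maps `a • newtonPI` into `a • newtonPJ`. -/
lemma aux_F_maps {d r : ℕ} {ℱ : Type} (Fσ : ℱ → ((Fin d → ℝ) →ₗ[ℝ] ℝ))
    (β : Fin r → (Fin d → ℤ)) {a : ℝ} {p : Fin d → ℝ}
    (hp : p ∈ a • newtonPI Fσ β) : Fmap Fσ p ∈ a • newtonPJ Fσ β := by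
  obtain ⟨q, hq, rfl⟩ := hp
  refine ⟨Fmap Fσ q, ?_, ((Fmap Fσ).map_smul a q).symm⟩
  have h1 : Fmap Fσ q ∈ Fmap Fσ '' newtonPI Fσ β := ⟨q, hq, rfl⟩
  revert h1
  apply Set.Subset.trans
  · exact Set.Subset.refl _
  unfold newtonPI newtonPJ
  rw [LinearMap.image_convexHull, Set.image_iUnion]
  apply convexHull_mono
  apply Set.iUnion_mono
  intro i
  rintro x ⟨y, ⟨c, hc, rfl⟩, rfl⟩
  exact ⟨Fmap Fσ c, fun σ => hc σ, by simp [vadd_eq_add, map_add]⟩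

end Aux

/-- if `w ∈ ℚ^d` satisfies `F_σ(w) ≥ -1` for all `σ`, then
`F(w + interior(α P_I)) ⊆ -e + interior(α P_J)`; i.e. for every `z ∈ interior(α P_I)`,
`F(w) + F(z) + e ∈ interior(α P_J)`. -/
theorem stmt11 (d : ℕ) (hd : 1 ≤ d) (ℱ : Type) [Fintype ℱ] [Nonempty ℱ]
    (Fσ : ℱ → ((Fin d → ℝ) →ₗ[ℝ] ℝ))
    (hFint : ∀ σ (v : Fin d → ℤ), ∃ z : ℤ, Fσ σ (castR v) = z)
    (hFsurj : ∀ σ (z : ℤ), ∃ v : Fin d → ℤ, Fσ σ (castR v) = z)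
    (hFinj : Function.Injective (Fmap Fσ))
    (hfull : (interior (coneC Fσ)).Nonempty)
    (r : ℕ) (hr : 1 ≤ r) (β : Fin r → (Fin d → ℤ))
    (hβ : ∀ i, castR (β i) ∈ coneC Fσ)
    (α : ℚ) (hα : 0 < α)
    (w : Fin d → ℝ) (hwrat : isRatVec w) (hw : ∀ σ, -1 ≤ Fσ σ w) :
    ∀ z ∈ interior ((α : ℝ) • newtonPI Fσ β),
      Fmap Fσ w + Fmap Fσ z + (fun _ => 1) ∈ interior ((α : ℝ) • newtonPJ Fσ β) := by

  intro z hz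
  obtain ⟨c, hc⟩ := hfull
  have hcpos : ∀ σ, 0 < Fσ σ c := by
    intro σ
    rcases lt_or_eq_of_le ((interior_subset hc) σ) with h | h
    · exact h
    · exfalso
      obtain ⟨v, hv⟩ := hFsurj σ 1
      obtain ⟨ε, hε, hball⟩ := Metric.mem_nhds_iff.1 (mem_interior_iff_mem_nhds.1 hc)
      have hnormpos : (0:ℝ) < ‖castR v‖ + 1 := by positivity
      set s := ε / (2 * (‖castR v‖ + 1)) with hs
      have hspos : 0 < s := by positivity
      have hmem : c - s • castR v ∈ Metric.ball c ε := by
        rw [Metric.mem_ball, dist_eq_norm]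
        have h0 : c - s • castR v - c = -(s • castR v) := by abel
        rw [h0, norm_neg, norm_smul, Real.norm_of_nonneg hspos.le]
        calc s * ‖castR v‖ < s * (‖castR v‖ + 1) := by nlinarith
        _ = ε / 2 := by rw [hs]; field_simp
        _ < ε := by linarith
      have hge := hball hmem σ
      rw [map_sub, map_smul, ← h, hv] at hge
      simp only [Int.cast_one, smul_eq_mul, mul_one, zero_sub] at hge
      linarith
  obtain ⟨ε, hε, hball⟩ := Metric.mem_nhds_iff.1 (mem_interior_iff_mem_nhds.1 hz)
  have hnormpos : (0:ℝ) < ‖c‖ + 1 := by positivity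
  set t := ε / (2 * (‖c‖ + 1)) with ht
  have htpos : 0 < t := by positivity
  have hmem : z - t • c ∈ (α : ℝ) • newtonPI Fσ β := by
    apply hball
    rw [Metric.mem_ball, dist_eq_norm]
    have h0 : z - t • c - z = -(t • c) := by abel
    rw [h0, norm_neg, norm_smul, Real.norm_of_nonneg htpos.le]
    calc t * ‖c‖ < t * (‖c‖ + 1) := by nlinarith
    _ = ε / 2 := by rw [ht]; field_simp
    _ < ε := by linarith
  have hα' : (0:ℝ) < (α : ℝ) := by exact_mod_cast hα
  have hFmem := aux_F_maps Fσ β hmem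
  have hy : ∀ σ, 0 < t * Fσ σ c + (Fσ σ w + 1) := fun σ => by
    have := hw σ
    have := hcpos σ
    nlinarith
  have key := aux_mem_interior Fσ β hα' hFmem hy
  have heq : Fmap Fσ w + Fmap Fσ z + (fun _ => 1)
      = (fun σ => t * Fσ σ c + (Fσ σ w + 1)) + Fmap Fσ (z - t • c) := by
    funext σ
    simp only [Pi.add_apply, Fmap, map_sub, map_smul, Pi.sub_apply, Pi.smul_apply,
      LinearMap.pi_apply, smul_eq_mul]
    ring
  rw [heq]
  exact key
end

section
/- Let α be a positive rational number and let v ∈ C ∩ ℤ^d be a lattice point with F(v) + e ∈ interior(α·P_J). Then there exists w ∈ ℚ^d with F_σ(w) > −1 for every σ ∈ ℱ such that F(v) − F(w) lies in the relative (intrinsic) interior of α·P_{F(I)}. -/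
open Pointwise

lemma aux_mem_intrinsic {E F : Type*} [NormedAddCommGroup E] [NormedSpace ℝ E]
    [NormedAddCommGroup F] [NormedSpace ℝ F] [FiniteDimensional ℝ E]
    (f : E →ₗ[ℝ] F) (hf : Function.Injective f) {s : Set E} {x : E}
    (hx : x ∈ interior s) : f x ∈ intrinsicInterior ℝ (f '' s) := by
  set V := LinearMap.range f with hV
  let e : E ≃ₗ[ℝ] V := LinearEquiv.ofInjective f hf
  let g : E ≃L[ℝ] V := e.toContinuousLinearEquiv
  have hcoe : ∀ y : E, (V.subtypeₗᵢ.toAffineIsometry) (g y) = f y := by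
    intro y
    show ((LinearEquiv.ofInjective f hf) y : F) = f y
    rfl
  have himg : f '' s = V.subtypeₗᵢ.toAffineIsometry '' (g '' s) := by
    rw [← Set.image_comp]
    exact (Set.image_congr fun y _ => (hcoe y).symm)
  rw [himg, AffineIsometry.image_intrinsicInterior]
  refine ⟨g x, ?_, hcoe x⟩
  apply interior_subset_intrinsicInterior
  have : (g : E → V) '' interior s = interior ((g : E → V) '' s) := by
    have := g.toHomeomorph.image_interior s
    simpa using this
  rw [← this]
  exact ⟨x, hx, rfl⟩

/-- if `v ∈ C ∩ ℤ^d` is a lattice point with `F(v) + e ∈ interior(α P_J)`, then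
there exists `w ∈ ℚ^d` with `F_σ(w) > -1` for every `σ` such that `F(v) - F(w)` lies in the
relative (intrinsic) interior of `α P_{F(I)}`. -/
theorem stmt12 (d : ℕ) (hd : 1 ≤ d) (ℱ : Type) [Fintype ℱ] [Nonempty ℱ]
    (Fσ : ℱ → ((Fin d → ℝ) →ₗ[ℝ] ℝ))
    (hFint : ∀ σ (v : Fin d → ℤ), ∃ z : ℤ, Fσ σ (castR v) = z)
    (hFsurj : ∀ σ (z : ℤ), ∃ v : Fin d → ℤ, Fσ σ (castR v) = z)
    (hFinj : Function.Injective (Fmap Fσ))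
    (hfull : (interior (coneC Fσ)).Nonempty)
    (r : ℕ) (hr : 1 ≤ r) (β : Fin r → (Fin d → ℤ))
    (hβ : ∀ i, castR (β i) ∈ coneC Fσ)
    (α : ℚ) (hα : 0 < α)
    (v : Fin d → ℤ) (hv : castR v ∈ coneC Fσ)
    (hvP : Fmap Fσ (castR v) + (fun _ => 1) ∈ interior ((α : ℝ) • newtonPJ Fσ β)) :
    ∃ w : Fin d → ℝ, isRatVec w ∧ (∀ σ, -1 < Fσ σ w) ∧
      Fmap Fσ (castR v) - Fmap Fσ w ∈
        intrinsicInterior ℝ ((α : ℝ) • newtonPFI Fσ β) := by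
  classical
  obtain ⟨c, hc⟩ := hfull
  have hαR : (0:ℝ) < (α:ℝ) := by exact_mod_cast hα
  set βc : Fin r → (Fin d → ℝ) := fun i => castR (β i) with hβc
  set K' : Set (Fin d → ℝ) := convexHull ℝ (Set.range βc) with hK'
  set K : Set (ℱ → ℝ) := convexHull ℝ (Set.range fun i => Fmap Fσ (βc i)) with hK
  set z : ℱ → ℝ := Fmap Fσ (castR v) + (fun _ => 1) with hzdef
  have hzσ : ∀ σ, z σ = Fσ σ (castR v) + 1 := fun σ => rfl
  -- convexity of the cone and orthant
  have hCconv : Convex ℝ (coneC Fσ) := by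
    intro p hp q hq a b ha hb hab σ
    have h1 := hp σ
    have h2 := hq σ
    simp only [map_add, map_smul, smul_eq_mul]
    have := add_nonneg (mul_nonneg ha h1) (mul_nonneg hb h2)
    simpa using this
  have horth : Convex ℝ (orthant ℱ) := by
    intro p hp q hq a b ha hb hab σ
    have h1 := hp σ
    have h2 := hq σ
    have := add_nonneg (mul_nonneg ha h1) (mul_nonneg hb h2)
    simpa using this
  -- P_J ⊆ K + orthant
  have hPJsub : newtonPJ Fσ β ⊆ K + orthant ℱ := by
    refine convexHull_min ?_ ((convex_convexHull ℝ _).add horth)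
    intro y hy
    rw [Set.mem_iUnion] at hy
    obtain ⟨i, hy⟩ := hy
    rw [Set.mem_vadd_set] at hy
    obtain ⟨su, hsu, rfl⟩ := hy
    exact ⟨Fmap Fσ (βc i), subset_convexHull ℝ _ ⟨i, rfl⟩, su, hsu, rfl⟩
  -- extract a slightly smaller interior point of α P_J
  obtain ⟨δ, hδ, hball⟩ := Metric.mem_nhds_iff.1 (mem_interior_iff_mem_nhds.1 hvP)
  set e1 : ℱ → ℝ := fun _ => 1 with he1
  have hne : (0:ℝ) ≤ ‖e1‖ := norm_nonneg _
  set δ' : ℝ := δ / (2 * (‖e1‖ + 1)) with hδ'def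
  have hδ' : 0 < δ' := by positivity
  have hz' : z - δ' • e1 ∈ (α:ℝ) • newtonPJ Fσ β := by
    apply hball
    rw [Metric.mem_ball, dist_eq_norm]
    have h1 : z - δ' • e1 - z = -(δ' • e1) := by abel
    rw [h1, norm_neg, norm_smul, Real.norm_eq_abs, abs_of_pos hδ']
    have h2 : δ' * (‖e1‖ + 1) = δ / 2 := by
      rw [hδ'def]; field_simp
    nlinarith
  obtain ⟨y, hy, hzy⟩ := hz'
  obtain ⟨k, hk, su, hsu, rfl⟩ := hPJsub hy
  have hKi : K = Fmap Fσ '' K' := by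
    rw [hK, hK', LinearMap.image_convexHull, ← Set.range_comp]
    rfl
  rw [hKi] at hk
  obtain ⟨xk, hxk, rfl⟩ := hk
  have hzb : ∀ σ, (α:ℝ) * Fσ σ xk + δ' ≤ z σ := by
    intro σ
    have h1 := congrFun hzy σ
    simp only [Pi.smul_apply, Pi.add_apply, Pi.sub_apply, smul_eq_mul, he1] at h1
    have h2 := hsu σ
    have h3 : Fmap Fσ xk σ = Fσ σ xk := rfl
    rw [h3] at h1
    nlinarith [mul_nonneg hαR.le h2]
  -- choose ε
  have hM : ∃ M : ℝ, 0 ≤ M ∧ ∀ σ, Fσ σ c ≤ M := by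
    obtain ⟨σ₀⟩ := ‹Nonempty ℱ›
    refine ⟨Finset.univ.sup' ⟨σ₀, Finset.mem_univ σ₀⟩ (fun σ => Fσ σ c), ?_, ?_⟩
    · exact le_trans (interior_subset hc σ₀)
        (Finset.le_sup' (f := fun σ => Fσ σ c) (Finset.mem_univ σ₀))
    · intro σ; exact Finset.le_sup' (f := fun σ => Fσ σ c) (Finset.mem_univ σ)
  obtain ⟨M, hM0, hMb⟩ := hM
  set ε : ℝ := δ' / ((α:ℝ) * (M + 1)) with hεdef
  have hε : 0 < ε := by positivity
  have hεb : ∀ σ, (α:ℝ) * (ε * Fσ σ c) < δ' := by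
    intro σ
    have h0 : 0 ≤ Fσ σ c := interior_subset hc σ
    have h1 : Fσ σ c ≤ M := hMb σ
    have h2 : (α:ℝ) * (M + 1) * ε = δ' := by
      rw [hεdef]; field_simp
    nlinarith
  -- ε • c is interior to the cone
  have hc' : ε • c ∈ interior (coneC Fσ) := by
    have hopen : IsOpen (ε • interior (coneC Fσ)) := isOpen_interior.smul₀ hε.ne'
    have hsub : ε • interior (coneC Fσ) ⊆ coneC Fσ := by
      rintro _ ⟨p, hp, rfl⟩ σ
      have h0 := interior_subset hp σ
      rw [map_smul, smul_eq_mul]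
      positivity
    exact interior_maximal hsub hopen ⟨c, hc, rfl⟩
  -- K' + C ⊆ P_I
  have hKC : ∀ x ∈ K', ∀ p ∈ coneC Fσ, x + p ∈ newtonPI Fσ β := by
    intro x hx p hp
    have h1 : x + p ∈ convexHull ℝ (Set.range βc) + convexHull ℝ (coneC Fσ) :=
      ⟨x, hx, p, subset_convexHull ℝ _ hp, rfl⟩
    rw [← convexHull_add] at h1
    refine convexHull_mono ?_ h1
    rintro _ ⟨a, ⟨i, rfl⟩, pp, hpp, rfl⟩
    refine Set.mem_iUnion.2 ⟨i, ?_⟩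
    rw [Set.mem_vadd_set]
    exact ⟨pp, hpp, rfl⟩
  -- interior point of P_I
  have hqmem : xk + ε • c ∈ interior (newtonPI Fσ β) := by
    have heq : xk +ᵥ interior (coneC Fσ) = (fun p => xk + p) '' interior (coneC Fσ) := by
      ext y
      simp only [Set.mem_vadd_set, Set.mem_image, vadd_eq_add]
    have hopen : IsOpen (xk +ᵥ interior (coneC Fσ)) := by
      rw [heq]
      exact (Homeomorph.addLeft xk).isOpenMap _ isOpen_interior
    have hsub : xk +ᵥ interior (coneC Fσ) ⊆ newtonPI Fσ β := by
      intro y hy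
      rw [Set.mem_vadd_set] at hy
      obtain ⟨p, hp, rfl⟩ := hy
      have : xk +ᵥ p = xk + p := rfl
      rw [this]
      exact hKC xk hxk p (interior_subset hp)
    refine interior_maximal hsub hopen ?_
    rw [Set.mem_vadd_set]
    exact ⟨ε • c, hc', rfl⟩
  set p₀ : Fin d → ℝ := (α:ℝ) • (xk + ε • c) with hp₀def
  have hp₀ : p₀ ∈ interior ((α:ℝ) • newtonPI Fσ β) := by
    rw [interior_smul₀ hαR.ne']
    exact Set.smul_mem_smul_set hqmem
  have hFb : ∀ σ, Fσ σ p₀ < Fσ σ (castR v) + 1 := by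
    intro σ
    have h1 := hzb σ
    have h2 := hεb σ
    have h3 : Fσ σ p₀ = (α:ℝ) * (Fσ σ xk + ε * Fσ σ c) := by
      rw [hp₀def, map_smul, smul_eq_mul, map_add, map_smul, smul_eq_mul]
    rw [hzσ σ] at h1
    nlinarith
  -- the open set of admissible w
  set U : Set (Fin d → ℝ) :=
    {w | castR v - w ∈ interior ((α:ℝ) • newtonPI Fσ β)} ∩ ⋂ σ, {w | -1 < Fσ σ w} with hU
  have hUopen : IsOpen U := by
    apply IsOpen.inter
    · have : {w | castR v - w ∈ interior ((α:ℝ) • newtonPI Fσ β)} =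
          (fun w => castR v - w) ⁻¹' interior ((α:ℝ) • newtonPI Fσ β) := rfl
      rw [this]
      exact isOpen_interior.preimage (continuous_const.sub continuous_id)
    · refine isOpen_iInter_of_finite fun σ => ?_
      have : {w | -1 < Fσ σ w} = (Fσ σ) ⁻¹' Set.Ioi (-1) := rfl
      rw [this]
      exact isOpen_Ioi.preimage (Fσ σ).continuous_of_finiteDimensional
  have hw₀ : castR v - p₀ ∈ U := by
    constructor
    · show castR v - (castR v - p₀) ∈ interior ((α:ℝ) • newtonPI Fσ β)
      have h : castR v - (castR v - p₀) = p₀ := by abel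
      rw [h]
      exact hp₀
    · refine Set.mem_iInter.2 fun σ => ?_
      show -1 < Fσ σ (castR v - p₀)
      rw [map_sub]
      have := hFb σ
      linarith
  obtain ⟨η, hη, hballU⟩ := Metric.isOpen_iff.1 hUopen _ hw₀
  have hrat : ∀ i, ∃ q : ℚ, |(castR v - p₀) i - (q:ℝ)| < η/2 := by
    intro i
    obtain ⟨q, hq1, hq2⟩ :=
      exists_rat_btwn (show (castR v - p₀) i - η/2 < (castR v - p₀) i by linarith)
    exact ⟨q, by rw [abs_sub_lt_iff]; constructor <;> linarith⟩
  choose qv hqv using hrat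
  set w : Fin d → ℝ := fun i => (qv i : ℝ) with hwdef
  have hwU : w ∈ U := by
    apply hballU
    rw [Metric.mem_ball, dist_pi_lt_iff hη]
    intro i
    rw [Real.dist_eq]
    have h1 := hqv i
    have h2 : w i - (castR v - p₀) i = -((castR v - p₀) i - (qv i : ℝ)) := by
      simp [hwdef]
    rw [h2, abs_neg]
    linarith
  obtain ⟨hw1, hw2⟩ := hwU
  refine ⟨w, fun i => ⟨qv i, rfl⟩, fun σ => Set.mem_iInter.1 hw2 σ, ?_⟩
  -- final step: map into the intrinsic interior
  have hvaddimg : ∀ (a : Fin d → ℝ) (S : Set (Fin d → ℝ)),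
      Fmap Fσ '' (a +ᵥ S) = Fmap Fσ a +ᵥ (Fmap Fσ '' S) := by
    intro a S
    ext y
    simp only [Set.mem_image, Set.mem_vadd_set, vadd_eq_add]
    constructor
    · rintro ⟨u, ⟨b, hb, rfl⟩, rfl⟩
      exact ⟨Fmap Fσ b, ⟨b, hb, rfl⟩, (map_add (Fmap Fσ) a b).symm⟩
    · rintro ⟨u, ⟨b, hb, rfl⟩, rfl⟩
      exact ⟨a + b, ⟨b, hb, rfl⟩, map_add (Fmap Fσ) a b⟩
  have hPFI : Fmap Fσ '' newtonPI Fσ β = newtonPFI Fσ β := by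
    rw [newtonPI, newtonPFI, LinearMap.image_convexHull, Set.image_iUnion]
    exact congrArg (convexHull ℝ) (Set.iUnion_congr fun i => hvaddimg _ _)
  have hsmulimg : Fmap Fσ '' ((α:ℝ) • newtonPI Fσ β) =
      (α:ℝ) • (Fmap Fσ '' newtonPI Fσ β) := by
    ext y
    simp only [Set.mem_image, Set.mem_smul_set]
    constructor
    · rintro ⟨u, ⟨b, hb, rfl⟩, rfl⟩
      exact ⟨Fmap Fσ b, ⟨b, hb, rfl⟩, (map_smul (Fmap Fσ) _ _).symm⟩
    · rintro ⟨u, ⟨b, hb, rfl⟩, rfl⟩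
      exact ⟨(α:ℝ) • b, ⟨b, hb, rfl⟩, map_smul (Fmap Fσ) _ _⟩
  have himg : (α:ℝ) • newtonPFI Fσ β = Fmap Fσ '' ((α:ℝ) • newtonPI Fσ β) := by
    rw [hsmulimg, hPFI]
  rw [← map_sub, himg]
  exact aux_mem_intrinsic _ hFinj hw1
end

section
/- Let u ∈ ℤ^d and let p ∈ C ∩ ℤ^d. Then the integer ∏_{σ ∈ ℱ : F_σ(u) < 0} ∏_{j=0}^{−F_σ(u)−1} (F_σ(p) − j) equals 0 if and only if p + u ∉ C ∩ ℤ^d (equivalently, F_σ(p + u) < 0 for some σ ∈ ℱ). In other words, the polynomial ∏_{σ : F_σ(u)<0} ∏_{j=0}^{−F_σ(u)−1} (F_σ(θ) − j) vanishes at a point p of the semigroup ℕA = C ∩ ℤ^d exactly when p ∉ −u + ℕA. -/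
open Pointwise

/-- for `u ∈ ℤ^d` and `p ∈ ℕA = C ∩ ℤ^d`, the integer
`∏_{σ : F_σ(u) < 0} ∏_{j=0}^{-F_σ(u)-1} (F_σ(p) - j)` vanishes iff `p + u ∉ C ∩ ℤ^d`,
i.e. iff `F_σ(p + u) < 0` for some facet `σ`. -/
theorem stmt13 (d : ℕ) (hd : 1 ≤ d) (ℱ : Type) [Fintype ℱ] [Nonempty ℱ]
    (Fσ : ℱ → ((Fin d → ℝ) →ₗ[ℝ] ℝ))
    (hFint : ∀ σ (v : Fin d → ℤ), ∃ z : ℤ, Fσ σ (castR v) = z)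
    (hFsurj : ∀ σ (z : ℤ), ∃ v : Fin d → ℤ, Fσ σ (castR v) = z)
    (hFinj : Function.Injective (Fmap Fσ))
    (hfull : (interior (coneC Fσ)).Nonempty)
    (u : Fin d → ℤ) (p : Fin d → ℤ) (hp : castR p ∈ coneC Fσ) :
    ((∏ σ ∈ Finset.univ.filter (fun σ => Fσ σ (castR u) < 0),
        ∏ j ∈ Finset.range ⌊-(Fσ σ (castR u))⌋₊, (Fσ σ (castR p) - (j : ℝ))) = 0 ↔
      castR (p + u) ∉ coneC Fσ) ∧
    (castR (p + u) ∉ coneC Fσ ↔ ∃ σ, Fσ σ (castR (p + u)) < 0) := by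
  have hcast : castR (p + u) = castR p + castR u := by
    funext i; simp [castR]
  have hadd : ∀ σ, Fσ σ (castR (p + u)) = Fσ σ (castR p) + Fσ σ (castR u) := by
    intro σ; rw [hcast, map_add]
  have hnot : castR (p + u) ∉ coneC Fσ ↔ ∃ σ, Fσ σ (castR (p + u)) < 0 := by
    simp [coneC, not_forall, not_le]
  refine ⟨?_, hnot⟩
  rw [hnot, Finset.prod_eq_zero_iff]
  constructor
  · rintro ⟨σ, hσ, hz⟩
    rw [Finset.prod_eq_zero_iff] at hz
    obtain ⟨j, hj, hj0⟩ := hz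
    simp only [Finset.mem_range] at hj
    have h1 : Fσ σ (castR p) = j := by
      have := sub_eq_zero.mp hj0; linarith
    simp only [Finset.mem_filter] at hσ
    have hfl : (⌊-(Fσ σ (castR u))⌋₊ : ℝ) ≤ -(Fσ σ (castR u)) :=
      Nat.floor_le (by linarith [hσ.2])
    have hjj : (j : ℝ) + 1 ≤ (⌊-(Fσ σ (castR u))⌋₊ : ℝ) := by
      exact_mod_cast Nat.succ_le_of_lt hj
    exact ⟨σ, by rw [hadd]; linarith⟩
  · rintro ⟨σ, hσ⟩
    rw [hadd] at hσ
    have hp0 := hp σ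
    obtain ⟨a, ha⟩ := hFint σ p
    obtain ⟨b, hb⟩ := hFint σ u
    have hbu : Fσ σ (castR u) < 0 := by linarith
    have hb0 : b < 0 := by exact_mod_cast hb ▸ hbu
    have ha0 : 0 ≤ a := by exact_mod_cast ha ▸ hp0
    have hab : a < -b := by
      have : (a : ℝ) + (b : ℝ) < 0 := by rw [← ha, ← hb]; exact hσ
      have : (a : ℝ) < -(b : ℝ) := by linarith
      exact_mod_cast this
    refine ⟨σ, by simp [hbu], ?_⟩
    rw [Finset.prod_eq_zero_iff]
    refine ⟨a.toNat, ?_, ?_⟩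
    · simp only [Finset.mem_range]
      have hfl : ⌊-(Fσ σ (castR u))⌋₊ = (-b).toNat := by
        rw [hb, ← Int.cast_neg, ← Int.floor_toNat, Int.floor_intCast]
      rw [hfl]
      omega
    · rw [ha]
      have : ((a.toNat : ℤ) : ℝ) = (a : ℝ) := by exact_mod_cast Int.toNat_of_nonneg ha0
      push_cast at this ⊢
      rw [this]; ring
end

section
/- Let k be a field of characteristic 0 and let u ∈ ℤ^d. Inside the polynomial ring k[θ_1,…,θ_d], the set of polynomials f such that f(p) = 0 for every p ∈ C ∩ ℤ^d with p + u ∉ C ∩ ℤ^d is an ideal, and it equals the principal ideal generated by ∏_{σ ∈ ℱ : F_σ(u) < 0} ∏_{j=0}^{−F_σ(u)−1} (F_σ(θ) − j), where F_σ(θ) denotes the linear polynomial Σ_i c_{σ,i} θ_i whose integer coefficients c_{σ,i} are those of the functional F_σ. (This describes the ℤ^d-graded piece of degree u of the ring of differential operators D_A of the normal semigroup ring k[C ∩ ℤ^d].) -/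
open Pointwise

/-- The linear polynomial `F_σ(θ) = Σ_i c_{σ,i} θ_i ∈ k[θ_1,…,θ_d]` with integer
coefficients `c_{σ,i}`. -/
noncomputable def Fpoly {d : ℕ} (k : Type) [Field k] (c : Fin d → ℤ) :
    MvPolynomial (Fin d) k :=
  ∑ i, MvPolynomial.C ((c i : ℤ) : k) * MvPolynomial.X i

/-!
Each factor `F_σ(θ) - j` is prime: as `F_σ` is primitive there is a lattice vector `w` with
`F_σ(w) = 1`, and the substitution `θ ↦ θ + (j - F_σ(θ)) w` into the domain `k[θ]` has kernel
exactly `(F_σ(θ) - j)`. Distinct factors are not associate: for one facet the levels `j` differ,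
and for two facets the linear forms would be proportional, which fails at a relative interior
point of a facet. Hence the generator divides `f` as soon as every factor does, i.e. as soon as
`f` vanishes on the lattice points `x` of each hyperplane `F_σ = j` with `0 ≤ j < -F_σ(u)`.
Moving such an `x` far along a lattice vector `a` in the relative interior of the facet `σ`
gives points `x + s a ∈ ℕA` with `x + s a + u ∉ ℕA`, so `f` vanishes at `x + s a` for all large
`s`, hence at `x`. Conversely, if `p ∈ ℕA` and `p + u ∉ ℕA`, then `0 ≤ F_σ(p) < -F_σ(u)` for
some `σ`, and the factor with `j = F_σ(p)` vanishes at `p`.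
-/

open MvPolynomial Filter

variable {d : ℕ} {k : Type} [Field k]

lemma eval_intCast_Fpoly (c a : Fin d → ℤ) :
    eval (fun i => (a i : k)) (Fpoly k c) = ((c ⬝ᵥ a : ℤ) : k) := by
  simp [Fpoly, dotProduct]

noncomputable def hyperplaneRetraction (c w : Fin d → ℤ) (t : k) :
    MvPolynomial (Fin d) k →ₐ[k] MvPolynomial (Fin d) k :=
  aeval fun i => X i + C (w i : k) * (C t - Fpoly k c)

lemma hyperplaneRetraction_Fpoly {c w : Fin d → ℤ} (hw : c ⬝ᵥ w = 1) (t : k) :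
    hyperplaneRetraction c w t (Fpoly k c) = C t := by
  have hw' : ∑ i, C (c i : k) * C (w i : k) = (1 : MvPolynomial (Fin d) k) := by
    simp_rw [← map_mul, ← map_sum, ← Int.cast_mul, ← Int.cast_sum]
    rw [← dotProduct, hw, Int.cast_one, map_one]
  simp only [hyperplaneRetraction, Fpoly, map_sum, map_mul, aeval_C, aeval_X, algebraMap_eq,
    mul_add, Finset.sum_add_distrib, ← mul_assoc, ← Finset.sum_mul, hw', one_mul]
  ring

@[simp]
lemma hyperplaneRetraction_C (c w : Fin d → ℤ) (t s : k) :
    hyperplaneRetraction c w t (C s) = C s := by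
  rw [hyperplaneRetraction, aeval_C, algebraMap_eq]

lemma Fpoly_sub_C_ne_zero {c w : Fin d → ℤ} (hw : c ⬝ᵥ w = 1) (t : k) :
    Fpoly k c - C t ≠ 0 := fun h => by
  simpa [sub_eq_zero.1 h] using hyperplaneRetraction_Fpoly (k := k) hw (t + 1)

lemma mk_hyperplaneRetraction (c w : Fin d → ℤ) (t : k) (f : MvPolynomial (Fin d) k) :
    Ideal.Quotient.mk (Ideal.span {Fpoly k c - C t}) (hyperplaneRetraction c w t f) =
      Ideal.Quotient.mk (Ideal.span {Fpoly k c - C t}) f := by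
  have : (Ideal.Quotient.mkₐ k _).comp (hyperplaneRetraction c w t) =
      Ideal.Quotient.mkₐ k (Ideal.span {Fpoly k c - C t}) := by
    refine algHom_ext fun i => ?_
    simp only [AlgHom.comp_apply, hyperplaneRetraction, aeval_X, Ideal.Quotient.mkₐ_eq_mk,
      Ideal.Quotient.eq, add_sub_cancel_left, Ideal.mem_span_singleton]
    exact Dvd.intro_left (-C (w i : k)) (by ring)
  exact DFunLike.congr_fun this f

lemma ker_eq_span_singleton_of_mk_apply {A F : Type*} [CommRing A] [FunLike F A A]
    [RingHomClass F A A] {φ : F} {g : A} (hg : φ g = 0)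
    (hφ : ∀ a, Ideal.Quotient.mk (Ideal.span {g}) (φ a) = Ideal.Quotient.mk _ a) :
    RingHom.ker φ = Ideal.span {g} := by
  refine le_antisymm (fun a ha => ?_) ((Ideal.span_singleton_le_iff_mem _).2 hg)
  rw [← Ideal.Quotient.eq_zero_iff_mem, ← hφ, RingHom.mem_ker.1 ha, map_zero]

lemma ker_hyperplaneRetraction {c w : Fin d → ℤ} (hw : c ⬝ᵥ w = 1) (t : k) :
    RingHom.ker (hyperplaneRetraction c w t) = Ideal.span {Fpoly k c - C t} :=
  ker_eq_span_singleton_of_mk_apply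
    (by rw [map_sub, hyperplaneRetraction_Fpoly hw, hyperplaneRetraction_C, sub_self])
    (mk_hyperplaneRetraction c w t)

theorem prime_Fpoly_sub_C {c w : Fin d → ℤ} (hw : c ⬝ᵥ w = 1) (t : k) :
    Prime (Fpoly k c - C t) := by
  rw [← Ideal.span_singleton_prime (Fpoly_sub_C_ne_zero hw t), ← ker_hyperplaneRetraction hw]
  exact RingHom.ker_isPrime _

lemma eval_intCast_hyperplaneRetraction (c w a : Fin d → ℤ) (j : ℤ)
    (f : MvPolynomial (Fin d) k) :
    eval (fun i => (a i : k)) (hyperplaneRetraction c w (j : k) f) =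
      eval (fun i => ((a + (j - c ⬝ᵥ a) • w) i : k)) f := by
  rw [hyperplaneRetraction, aeval_eq_bind₁]
  change eval₂Hom (RingHom.id k) _ (bind₁ _ f) = eval₂Hom (RingHom.id k) _ f
  rw [eval₂Hom_bind₁]
  congr 2 with i
  change eval _ (X i + C (w i : k) * (C (j : k) - Fpoly k c)) = _
  simp only [map_add, map_mul, map_sub, eval_X, eval_C, eval_intCast_Fpoly, Pi.add_apply,
    Pi.smul_apply, smul_eq_mul]
  push_cast
  ring

lemma MvPolynomial.eq_zero_of_eval_intCast_eq_zero {σ : Type*} [CharZero k]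
    {f : MvPolynomial σ k} (h : ∀ a : σ → ℤ, eval (fun i => (a i : k)) f = 0) : f = 0 := by
  refine funext_set (fun _ => Set.range Int.cast)
    (fun _ => Set.infinite_range_of_injective Int.cast_injective) fun x hx => ?_
  choose a ha using fun i => hx i trivial
  obtain rfl : (fun i => (a i : k)) = x := _root_.funext ha
  exact h a

theorem Fpoly_sub_C_dvd_iff [CharZero k] {c w : Fin d → ℤ} (hw : c ⬝ᵥ w = 1) (j : ℤ)
    (f : MvPolynomial (Fin d) k) :
    Fpoly k c - C (j : k) ∣ f ↔ ∀ a, c ⬝ᵥ a = j → eval (fun i => (a i : k)) f = 0 := by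
  refine ⟨fun ⟨g, hg⟩ a ha => by simp [hg, eval_intCast_Fpoly, ha], fun h => ?_⟩
  rw [← Ideal.mem_span_singleton, ← ker_hyperplaneRetraction hw, RingHom.mem_ker]
  refine eq_zero_of_eval_intCast_eq_zero fun a => ?_
  rw [eval_intCast_hyperplaneRetraction]
  exact h _ (by rw [dotProduct_add, dotProduct_smul, hw, smul_eq_mul, mul_one, add_sub_cancel])

lemma MvPolynomial.eval_eq_zero_of_eventually_eval_add_smul [CharZero k] {σ : Type*}
    {f : MvPolynomial σ k} {x v : σ → k}
    (h : ∀ᶠ s : ℕ in atTop, eval (x + (s : k) • v) f = 0) : eval x f = 0 := by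
  set Q : Polynomial k :=
    aeval (fun i => Polynomial.C (x i) + Polynomial.C (v i) * Polynomial.X) f with hQdef
  have hQ : ∀ t : k, Q.eval t = eval (x + t • v) f := fun t => by
    rw [hQdef, aeval_def, polynomial_eval_eval₂]
    congr 1
    · ext; simp
    · ext i
      simp only [Polynomial.eval_add, Polynomial.eval_mul, Polynomial.eval_C, Polynomial.eval_X,
        Pi.add_apply, Pi.smul_apply, smul_eq_mul, mul_comm]
  have hQ0 : Q = 0 := by
    refine Polynomial.eq_zero_of_infinite_isRoot Q
      (((Nat.frequently_atTop_iff_infinite.1 h.frequently).image Nat.cast_injective.injOn).mono ?_)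
    rintro _ ⟨s, hs, rfl⟩
    simpa [hQ] using hs
  simpa [hQ0] using (hQ 0).symm

lemma exists_dotProduct_pos_of_real {ι : Type*} [Finite ι] (ℓ : ι → Fin d → ℤ) {p : Fin d → ℝ}
    (hp : ∀ τ, 0 < (Int.cast ∘ ℓ τ) ⬝ᵥ p) : ∃ b : Fin d → ℤ, ∀ τ, 0 < ℓ τ ⬝ᵥ b := by
  suffices ∀ τ, ∀ᶠ N : ℕ in atTop, 0 < ℓ τ ⬝ᵥ fun i => ⌊N * p i⌋ from
    (eventually_all.2 this).exists.elim fun _ h => ⟨_, h⟩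
  intro τ
  -- each coordinate of `⌊N p⌋` is within `1` of `N p`
  have hfloor : ∀ N : ℕ, N * ((Int.cast ∘ ℓ τ) ⬝ᵥ p) - ∑ i, |(ℓ τ i : ℝ)| ≤
      ((ℓ τ ⬝ᵥ fun i => ⌊N * p i⌋ : ℤ) : ℝ) := fun N => by
    simp only [dotProduct, Int.cast_sum, Int.cast_mul, Finset.mul_sum, ← Finset.sum_sub_distrib,
      Function.comp_apply]
    gcongr with i
    have h0 := Int.floor_le (N * p i)
    have h1 := Int.sub_one_lt_floor (N * p i)
    have h2 : |(ℓ τ i * (⌊N * p i⌋ - N * p i) : ℝ)| ≤ |(ℓ τ i : ℝ)| := by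
      rw [abs_mul]
      exact mul_le_of_le_one_right (abs_nonneg _) (abs_le.2 ⟨by linarith, by linarith⟩)
    linarith [(abs_le.1 h2).1]
  filter_upwards [(tendsto_natCast_atTop_atTop.atTop_mul_const (hp τ)).eventually_gt_atTop
    (∑ i, |(ℓ τ i : ℝ)|)] with N hN
  exact_mod_cast (show (0 : ℝ) < ((ℓ τ ⬝ᵥ fun i => ⌊N * p i⌋ : ℤ) : ℝ) by linarith [hfloor N])

lemma exists_dotProduct_eq_zero_and_pos {ι : Type*} [Finite ι] (c : ι → Fin d → ℤ) {σ : ι}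
    {w : Fin d → ℤ} (hw : c σ ⬝ᵥ w = 1) {p : Fin d → ℝ} (hpσ : (Int.cast ∘ c σ) ⬝ᵥ p = 0)
    (hpτ : ∀ τ ≠ σ, 0 < (Int.cast ∘ c τ) ⬝ᵥ p) :
    ∃ a : Fin d → ℤ, c σ ⬝ᵥ a = 0 ∧ ∀ τ ≠ σ, 0 < c τ ⬝ᵥ a := by
  -- project a lattice point found for the forms `c τ - (c τ ⬝ᵥ w) c σ` along `w` onto `c σ = 0`
  obtain ⟨b, hb⟩ := exists_dotProduct_pos_of_real
    (fun τ : {τ // τ ≠ σ} => c τ - (c τ ⬝ᵥ w) • c σ) (p := p) fun τ => by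
      have : (Int.cast ∘ (c τ - (c τ ⬝ᵥ w) • c σ) : Fin d → ℝ) =
          Int.cast ∘ c τ - ((c τ ⬝ᵥ w : ℤ) : ℝ) • (Int.cast ∘ c σ) := by
        ext; simp
      rw [this, sub_dotProduct, smul_dotProduct, hpσ, smul_zero, sub_zero]
      exact hpτ τ τ.2
  refine ⟨b - (c σ ⬝ᵥ b) • w, by
    rw [dotProduct_sub, dotProduct_smul, hw, smul_eq_mul, mul_one, sub_self], fun τ hτ => ?_⟩
  have := hb ⟨τ, hτ⟩
  simp only [sub_dotProduct, smul_dotProduct, smul_eq_mul] at this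
  rw [dotProduct_sub, dotProduct_smul, smul_eq_mul]
  linarith [mul_comm (c τ ⬝ᵥ w) (c σ ⬝ᵥ b)]

lemma eq_smul_of_dotProduct_eq_imp {c₁ c₂ w : Fin d → ℤ} (hw : c₁ ⬝ᵥ w = 1) {j₁ j₂ : ℤ}
    (h : ∀ a, c₁ ⬝ᵥ a = j₁ → c₂ ⬝ᵥ a = j₂) : c₂ = (c₂ ⬝ᵥ w) • c₁ := by
  ext i
  have h₀ := h (j₁ • w) (by rw [dotProduct_smul, hw, smul_eq_mul, mul_one])
  have hi := h (j₁ • w + Pi.single i 1 - (c₁ i) • w) (by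
    simp only [dotProduct_sub, dotProduct_add, dotProduct_smul, dotProduct_single, hw,
      smul_eq_mul]
    ring)
  simp only [dotProduct_sub, dotProduct_add, dotProduct_smul, dotProduct_single, smul_eq_mul,
    h₀] at hi
  simp only [Pi.smul_apply, smul_eq_mul]
  linarith

lemma dotProduct_eq_of_Fpoly_sub_C_dvd [CharZero k] {c₁ c₂ : Fin d → ℤ} {j₁ j₂ : ℤ}
    (h : Fpoly k c₁ - C (j₁ : k) ∣ Fpoly k c₂ - C (j₂ : k)) (a : Fin d → ℤ)
    (ha : c₁ ⬝ᵥ a = j₁) : c₂ ⬝ᵥ a = j₂ := by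
  obtain ⟨g, hg⟩ := h
  have := congr_arg (eval fun i => (a i : k)) hg
  simp only [map_sub, map_mul, eval_intCast_Fpoly, eval_C, ha, sub_self, zero_mul] at this
  exact_mod_cast sub_eq_zero.1 this

section LatticeCone

variable {ι : Type*} (c : ι → Fin d → ℤ)

/-- The normal affine semigroup `ℕA = C ∩ ℤ^d`. -/
def latticeCone : Set (Fin d → ℤ) := {p | ∀ σ, 0 ≤ c σ ⬝ᵥ p}

def DefinesFacets : Prop :=
  ∀ σ, ∃ p : Fin d → ℝ, (Int.cast ∘ c σ) ⬝ᵥ p = 0 ∧ ∀ τ ≠ σ, 0 < (Int.cast ∘ c τ) ⬝ᵥ p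

lemma Fpoly_sub_C_not_dvd [CharZero k] (hprim : ∀ σ, ∃ w, c σ ⬝ᵥ w = 1)
    (hfacet : DefinesFacets c)
    {σ₁ σ₂ : ι} {j₁ j₂ : ℤ} (hne : σ₁ ≠ σ₂ ∨ j₁ ≠ j₂) :
    ¬ Fpoly k (c σ₁) - C (j₁ : k) ∣ Fpoly k (c σ₂) - C (j₂ : k) := by
  intro h
  obtain ⟨w, hw⟩ := hprim σ₁
  have hzero := dotProduct_eq_of_Fpoly_sub_C_dvd h
  rcases eq_or_ne σ₁ σ₂ with rfl | hσ
  · have := hzero (j₁ • w) (by rw [dotProduct_smul, hw, smul_eq_mul, mul_one])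
    rw [dotProduct_smul, hw, smul_eq_mul, mul_one] at this
    exact hne.resolve_left (not_not.2 rfl) this
  · obtain ⟨p, hp₁, hp₂⟩ := hfacet σ₁
    have hpos := hp₂ σ₂ hσ.symm
    have hc : (Int.cast ∘ c σ₂ : Fin d → ℝ) = ((c σ₂ ⬝ᵥ w : ℤ) : ℝ) • (Int.cast ∘ c σ₁) := by
      conv_lhs => rw [eq_smul_of_dotProduct_eq_imp hw hzero]
      ext; simp
    rw [hc, smul_dotProduct, hp₁, smul_zero] at hpos
    exact hpos.false

variable (k) [Fintype ι]

noncomputable def boundaryPoly (u : Fin d → ℤ) : MvPolynomial (Fin d) k :=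
  ∏ σ with c σ ⬝ᵥ u < 0, ∏ j ∈ Finset.range (-(c σ ⬝ᵥ u)).toNat, (Fpoly k (c σ) - C (j : k))

variable {k}

lemma eval_boundaryPoly_eq_zero {p u : Fin d → ℤ} (hp : p ∈ latticeCone c)
    (hpu : p + u ∉ latticeCone c) : eval (fun i => (p i : k)) (boundaryPoly k c u) = 0 := by
  obtain ⟨σ, hσ⟩ : ∃ σ, c σ ⬝ᵥ (p + u) < 0 := by simpa [latticeCone] using hpu
  have hpσ := hp σ
  rw [dotProduct_add] at hσ
  rw [boundaryPoly, map_prod]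
  refine Finset.prod_eq_zero (i := σ) (by simp; omega) ?_
  rw [map_prod]
  refine Finset.prod_eq_zero (i := (c σ ⬝ᵥ p).toNat) (by simp; omega) ?_
  rw [map_sub, eval_intCast_Fpoly, eval_C, ← Int.cast_natCast, Int.toNat_of_nonneg hpσ, sub_self]

lemma eval_eq_zero_of_vanishing_on_boundary [CharZero k] {u : Fin d → ℤ}
    {f : MvPolynomial (Fin d) k}
    (hf : ∀ p ∈ latticeCone c, p + u ∉ latticeCone c → eval (fun i => (p i : k)) f = 0)
    {σ : ι} {a : Fin d → ℤ} (ha : c σ ⬝ᵥ a = 0) (ha' : ∀ τ ≠ σ, 0 < c τ ⬝ᵥ a)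
    {x : Fin d → ℤ} (hx : 0 ≤ c σ ⬝ᵥ x) (hxu : c σ ⬝ᵥ (x + u) < 0) :
    eval (fun i => (x i : k)) f = 0 := by
  refine eval_eq_zero_of_eventually_eval_add_smul (v := fun i => (a i : k)) ?_
  have hcone : ∀ᶠ s : ℕ in atTop, x + (s : ℤ) • a ∈ latticeCone c := by
    refine eventually_all.2 fun τ => ?_
    rcases eq_or_ne τ σ with rfl | hτ
    · exact .of_forall fun s => by rwa [dotProduct_add, dotProduct_smul, ha, smul_zero, add_zero]
    · filter_upwards [eventually_ge_atTop (-(c τ ⬝ᵥ x)).toNat] with s hs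
      rw [dotProduct_add, dotProduct_smul, smul_eq_mul]
      have : -(c τ ⬝ᵥ x) ≤ s := (Int.self_le_toNat _).trans (by exact_mod_cast hs)
      nlinarith [ha' τ hτ]
  filter_upwards [hcone] with s hs
  have hout : x + (s : ℤ) • a + u ∉ latticeCone c := fun h => by
    have := h σ
    rw [add_right_comm, dotProduct_add, dotProduct_smul, ha, smul_zero, add_zero] at this
    omega
  have hpt : (fun i => (x i : k)) + (s : k) • (fun i => (a i : k)) =
      fun i => ((x + (s : ℤ) • a) i : k) := by
    ext i
    simp
  rw [hpt]
  exact hf _ hs hout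

theorem boundaryPoly_dvd_iff [CharZero k] (hprim : ∀ σ, ∃ w, c σ ⬝ᵥ w = 1)
    (hfacet : DefinesFacets c)
    (u : Fin d → ℤ) (f : MvPolynomial (Fin d) k) :
    boundaryPoly k c u ∣ f ↔
      ∀ p ∈ latticeCone c, p + u ∉ latticeCone c → eval (fun i => (p i : k)) f = 0 := by
  refine ⟨fun ⟨g, hg⟩ p hp hpu => by
    rw [hg, map_mul, eval_boundaryPoly_eq_zero c hp hpu, zero_mul], fun hf => ?_⟩
  rw [boundaryPoly, Finset.prod_sigma']
  refine Finset.prod_dvd_of_isRelPrime ?_ fun ⟨σ, j⟩ hσj => ?_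
  · rintro ⟨σ₁, j₁⟩ - ⟨σ₂, j₂⟩ - hne
    obtain ⟨w, hw⟩ := hprim σ₁
    have hne' : σ₁ ≠ σ₂ ∨ (j₁ : ℤ) ≠ j₂ := by
      by_contra! h
      obtain ⟨rfl, h⟩ := h
      exact hne (by rw [Nat.cast_injective h])
    have := Fpoly_sub_C_not_dvd c hprim hfacet (k := k) hne'
    rw [Int.cast_natCast, Int.cast_natCast] at this
    exact ((prime_Fpoly_sub_C hw _).irreducible.isRelPrime_iff_not_dvd).2 this
  · simp only [Finset.mem_sigma, Finset.mem_filter, Finset.mem_univ, true_and,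
      Finset.mem_range] at hσj
    obtain ⟨w, hw⟩ := hprim σ
    obtain ⟨p, hpσ, hpτ⟩ := hfacet σ
    obtain ⟨a, ha, ha'⟩ := exists_dotProduct_eq_zero_and_pos c hw hpσ hpτ
    rw [← Int.cast_natCast, Fpoly_sub_C_dvd_iff hw]
    dsimp only at hσj ⊢
    exact fun x hx => eval_eq_zero_of_vanishing_on_boundary c hf ha ha' (by omega)
      (by rw [dotProduct_add]; omega)

end LatticeCone

lemma castR_mem_coneC_iff {ℱ : Type} {Fσ : ℱ → ((Fin d → ℝ) →ₗ[ℝ] ℝ)} {cσ : ℱ → Fin d → ℤ}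
    (hcσ : ∀ σ (p : Fin d → ℝ), Fσ σ p = ∑ i, (cσ σ i : ℝ) * p i) (v : Fin d → ℤ) :
    castR v ∈ coneC Fσ ↔ v ∈ latticeCone cσ := by
  simp [coneC, latticeCone, hcσ, castR, dotProduct, ← Int.cast_mul, ← Int.cast_sum]

theorem stmt14_general (d : ℕ) (ℱ : Type) [Fintype ℱ]
    (Fσ : ℱ → ((Fin d → ℝ) →ₗ[ℝ] ℝ))
    (hFsurj : ∀ σ (z : ℤ), ∃ v : Fin d → ℤ, Fσ σ (castR v) = z)
    (hfacet : ∀ σ, ∃ pσ ∈ coneC Fσ, Fσ σ pσ = 0 ∧ ∀ τ, τ ≠ σ → 0 < Fσ τ pσ)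
    (k : Type) [Field k] [CharZero k]
    (cσ : ℱ → Fin d → ℤ)
    (hcσ : ∀ σ (p : Fin d → ℝ), Fσ σ p = ∑ i, (cσ σ i : ℝ) * p i)
    (u : Fin d → ℤ) :
    {f : MvPolynomial (Fin d) k |
        ∀ p : Fin d → ℤ, castR p ∈ coneC Fσ → castR (p + u) ∉ coneC Fσ →
          MvPolynomial.eval (fun i => ((p i : ℤ) : k)) f = 0} =
      ↑(Ideal.span
        {∏ σ ∈ Finset.univ.filter (fun σ => Fσ σ (castR u) < 0),
          ∏ j ∈ Finset.range ⌊-(Fσ σ (castR u))⌋₊,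
            (Fpoly k (cσ σ) - MvPolynomial.C (j : k))}) := by
  have hF : ∀ σ v, Fσ σ (castR v) = ((cσ σ ⬝ᵥ v : ℤ) : ℝ) := fun σ v => by
    simp [hcσ, castR, dotProduct]
  have hprim : ∀ σ, ∃ w, cσ σ ⬝ᵥ w = 1 := fun σ =>
    (hFsurj σ 1).imp fun w hw => by exact_mod_cast (hF σ w).symm.trans hw
  have hfacet' : DefinesFacets cσ := fun σ =>
    let ⟨p, _, hpσ, hpτ⟩ := hfacet σ
    ⟨p, (hcσ σ p).symm.trans hpσ, fun τ hτ => (hpτ τ hτ).trans_eq (hcσ τ p)⟩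
  have hgen : ∏ σ ∈ Finset.univ.filter (fun σ => Fσ σ (castR u) < 0),
      ∏ j ∈ Finset.range ⌊-(Fσ σ (castR u))⌋₊, (Fpoly k (cσ σ) - C (j : k)) =
        boundaryPoly k cσ u := by
    simp only [boundaryPoly, hF, Int.cast_lt_zero, ← Int.cast_neg, ← Int.floor_toNat,
      Int.floor_intCast]
  ext f
  rw [SetLike.mem_coe, Ideal.mem_span_singleton, hgen, boundaryPoly_dvd_iff cσ hprim hfacet']
  simp only [Set.mem_ofPred_eq, castR_mem_coneC_iff hcσ]

/-- for `u ∈ ℤ^d`, the set of polynomials `f ∈ k[θ_1,…,θ_d]` vanishing at every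
`p ∈ ℕA = C ∩ ℤ^d` with `p + u ∉ ℕA` is an ideal, namely the principal ideal generated by
`∏_{σ : F_σ(u)<0} ∏_{j=0}^{-F_σ(u)-1} (F_σ(θ) - j)` (the degree-`u` graded piece of the ring
of differential operators `D_A` of the normal semigroup ring `k[C ∩ ℤ^d]`). -/
theorem stmt14 (d : ℕ) (hd : 1 ≤ d) (ℱ : Type) [Fintype ℱ] [Nonempty ℱ]
    (Fσ : ℱ → ((Fin d → ℝ) →ₗ[ℝ] ℝ))
    (hFint : ∀ σ (v : Fin d → ℤ), ∃ z : ℤ, Fσ σ (castR v) = z)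
    (hFsurj : ∀ σ (z : ℤ), ∃ v : Fin d → ℤ, Fσ σ (castR v) = z)
    (hFinj : Function.Injective (Fmap Fσ))
    (hfull : (interior (coneC Fσ)).Nonempty)
    (hfacet : ∀ σ, ∃ pσ ∈ coneC Fσ, Fσ σ pσ = 0 ∧ ∀ τ, τ ≠ σ → 0 < Fσ τ pσ)
    (k : Type) [Field k] [CharZero k]
    (cσ : ℱ → Fin d → ℤ)
    (hcσ : ∀ σ (p : Fin d → ℝ), Fσ σ p = ∑ i, (cσ σ i : ℝ) * p i)
    (u : Fin d → ℤ) :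
    {f : MvPolynomial (Fin d) k |
        ∀ p : Fin d → ℤ, castR p ∈ coneC Fσ → castR (p + u) ∉ coneC Fσ →
          MvPolynomial.eval (fun i => ((p i : ℤ) : k)) f = 0} =
      ↑(Ideal.span
        {∏ σ ∈ Finset.univ.filter (fun σ => Fσ σ (castR u) < 0),
          ∏ j ∈ Finset.range ⌊-(Fσ σ (castR u))⌋₊,
            (Fpoly k (cσ σ) - MvPolynomial.C (j : k))}) :=
  stmt14_general d ℱ Fσ hFsurj hfacet k cσ hcσ u
end
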